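/- arXiv:0802.4272 — 9 statements merged into one kernel-verified Lean document; each statement's English description precedes it below -/
import Mathlib

section
/- F has exactly one zero θ_l in the interval (−π/2, π/2), and θ_l ∈ (−π/2, 0); F has exactly one zero θ_r in (π/2, 3π/2), and θ_r ∈ (π, 3π/2); F > 0 on the open interval (θ_l, θ_r); and g(θ) → +∞ both as θ → θ_l from the right and as θ → θ_r from the left. -/
/-!
Where `sin θ ≥ 0` the constant `κ ≥ 1/2` dominates the perturbation, so `F > 0` on `[0, π]`; where
`sin θ ≤ -√3/2` the term `c sin θ ≤ -√3` dominates, so `F < 0`; and on `[-π/3, 0]`, where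
`cos θ ≥ 1/2`, `F' = c cos θ + e' ≥ 1 - 1/100 > 0`. Hence `F` has exactly one zero in `(-π/2, π/2)`,
and it lies in `(-π/3, 0)`. As `sin (π - θ) = sin θ`, the same argument applied to `θ ↦ F (π - θ)`
produces the zero in `(π/2, 3π/2)`. At both zeros `F → 0⁺`, so `-d ln F → +∞`.
-/

open Filter Real Set Topology

theorem tendsto_add_sub_mul_log_atTop {f : ℝ → ℝ} {l : Filter ℝ} {x₀ d : ℝ} (a : ℝ)
    (hl : l ≤ 𝓝 x₀) (hf : ContinuousAt f x₀) (hf₀ : f x₀ = 0) (hpos : ∀ᶠ θ in l, 0 < f θ)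
    (hd : 0 < d) : Tendsto (fun θ => θ + a - d * log (f θ)) l atTop := by
  have hf_zero : Tendsto f l (𝓝[>] 0) :=
    tendsto_nhdsWithin_of_tendsto_nhds_of_eventually_within _ (hf₀ ▸ hf.tendsto.mono_left hl) hpos
  have hlog : Tendsto (fun θ => -(d * log (f θ))) l atTop :=
    tendsto_neg_atTop_iff.mpr ((tendsto_log_nhdsGT_zero.comp hf_zero).const_mul_atBot hd)
  simpa only [sub_eq_add_neg] using
    ((continuous_add_const a).tendsto x₀ |>.mono_left hl).add_atTop hlog

noncomputable def perturbedSine (κ c : ℝ) (e : ℝ → ℝ) (θ : ℝ) : ℝ := κ + c * sin θ + e θ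

section PerturbedSine

variable {κ c : ℝ} {e : ℝ → ℝ}

theorem perturbedSine_comp_pi_sub (θ : ℝ) :
    perturbedSine κ c (fun θ => e (π - θ)) θ = perturbedSine κ c e (π - θ) := by
  simp only [perturbedSine, sin_pi_sub]

theorem continuous_perturbedSine (he : Continuous e) : Continuous (perturbedSine κ c e) :=
  (continuous_const.add (continuous_const.mul continuous_sin)).add he

theorem hasDerivAt_perturbedSine (he : Differentiable ℝ e) (θ : ℝ) :
    HasDerivAt (perturbedSine κ c e) (c * cos θ + deriv e θ) θ :=
  (((hasDerivAt_sin θ).const_mul c).const_add κ).add (he θ).hasDerivAt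

theorem perturbedSine_pos_of_sin_nonneg {θ : ℝ} (hc : 0 ≤ c) (he : |e θ| < κ)
    (hθ : 0 ≤ sin θ) : 0 < perturbedSine κ c e θ := by
  have := (abs_lt.mp he).1
  have := mul_nonneg hc hθ
  unfold perturbedSine
  linarith

theorem perturbedSine_neg_of_sin_le {θ s : ℝ} (hc : 0 ≤ c) (he : κ + |e θ| < c * s)
    (hθ : sin θ ≤ -s) : perturbedSine κ c e θ < 0 := by
  have := le_abs_self (e θ)
  have := mul_le_mul_of_nonneg_left hθ hc
  unfold perturbedSine
  linarith

theorem strictMonoOn_perturbedSine {s : Set ℝ} (he : Differentiable ℝ e) (hs : Convex ℝ s)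
    (hderiv : ∀ θ ∈ interior s, |deriv e θ| < c * cos θ) : StrictMonoOn (perturbedSine κ c e) s :=
  strictMonoOn_of_deriv_pos hs (continuous_perturbedSine he.continuous).continuousOn fun θ hθ => by
    rw [(hasDerivAt_perturbedSine he θ).deriv]
    linarith [neg_abs_le (deriv e θ), hderiv θ hθ]

theorem exists_unique_zero_perturbedSine (hc : 2 ≤ c) (hκ : κ ∈ Icc (1/2 : ℝ) (3/2))
    (he : Differentiable ℝ e) (he₀ : ∀ θ, |e θ| ≤ 1/100) (he₁ : ∀ θ, |deriv e θ| ≤ 1/100) :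
    ∃ θl ∈ Ioo (-(π/2)) 0,
      (∀ θ ∈ Ioo (-(π/2)) (π/2), perturbedSine κ c e θ = 0 ↔ θ = θl) ∧
      ∀ θ ∈ Ioo θl π, 0 < perturbedSine κ c e θ := by
  have hπ := pi_pos
  have hpos : ∀ θ, 0 ≤ sin θ → 0 < perturbedSine κ c e θ := fun θ =>
    perturbedSine_pos_of_sin_nonneg (by linarith) (by linarith [he₀ θ, hκ.1])
  have hneg : ∀ θ ∈ Icc (-(π/2)) (-(π/3)), perturbedSine κ c e θ < 0 := by
    intro θ hθ
    have hsqrt : (151/100 : ℝ) < √3 := (lt_sqrt (by norm_num)).mpr (by norm_num)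
    refine perturbedSine_neg_of_sin_le (s := √3/2) (by linarith) ?_ ?_
    · nlinarith [he₀ θ, hκ.2]
    · calc sin θ ≤ sin (-(π/3)) := sin_le_sin_of_le_of_le_pi_div_two hθ.1 (by linarith) hθ.2
        _ = -(√3/2) := by rw [sin_neg, sin_pi_div_three]
  have hmono : StrictMonoOn (perturbedSine κ c e) (Icc (-(π/3)) 0) := by
    refine strictMonoOn_perturbedSine he (convex_Icc _ _) fun θ hθ => ?_
    rw [interior_Icc] at hθ
    have hcos : 1/2 ≤ cos θ := by
      rw [← cos_neg, ← cos_pi_div_three]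
      exact cos_le_cos_of_nonneg_of_le_pi (by linarith [hθ.2]) (by linarith) (by linarith [hθ.1])
    nlinarith [he₁ θ]
  obtain ⟨θl, hθl, hzero⟩ := intermediate_value_Ioo (by linarith : -(π/3) ≤ 0)
    (continuous_perturbedSine he.continuous).continuousOn
    ⟨hneg _ ⟨by linarith, le_rfl⟩, hpos 0 sin_zero.ge⟩
  refine ⟨θl, ⟨by linarith [hθl.1], hθl.2⟩, fun θ hθ => ⟨fun hθ₀ => ?_, fun h => h ▸ hzero⟩,
    fun θ hθ => ?_⟩
  · rcases le_or_gt θ (-(π/3)) with h | h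
    · exact absurd hθ₀ (hneg θ ⟨hθ.1.le, h⟩).ne
    rcases le_or_gt θ 0 with h' | h'
    · exact hmono.injOn ⟨h.le, h'⟩ (Ioo_subset_Icc_self hθl) (hθ₀.trans hzero.symm)
    · exact absurd hθ₀ (hpos θ (sin_nonneg_of_nonneg_of_le_pi h'.le (by linarith [hθ.2]))).ne'
  · rcases le_or_gt θ 0 with h | h
    · exact hzero ▸ hmono (Ioo_subset_Icc_self hθl) ⟨by linarith [hθ.1, hθl.1], h⟩ hθ.1
    · exact hpos θ (sin_nonneg_of_nonneg_of_le_pi h.le hθ.2.le)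

end PerturbedSine

/-- Zeros θ_l, θ_r of F(θ) = κ + c sin θ + e(θ), positivity of F in between,
and blow-up of g(θ) = θ + a - d ln F(θ) at both ends. -/
theorem stmt4 (c d κ a : ℝ) (hc : c ∈ Set.Icc (2:ℝ) 10) (hd : 100 ≤ d)
    (hκ : κ ∈ Set.Icc (1/2 : ℝ) (3/2)) (e : ℝ → ℝ) (he : ContDiff ℝ 2 e)
    (hbd : ∀ θ, |e θ| + |deriv e θ| + |deriv (deriv e) θ| ≤ 1/100)
    (F g : ℝ → ℝ) (hF : F = fun θ => κ + c * Real.sin θ + e θ)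
    (hg : g = fun θ => θ + a - d * Real.log (F θ)) :
    ∃ θl θr : ℝ,
      θl ∈ Set.Ioo (-(Real.pi/2)) 0 ∧
      (∀ θ ∈ Set.Ioo (-(Real.pi/2)) (Real.pi/2), (F θ = 0 ↔ θ = θl)) ∧
      θr ∈ Set.Ioo Real.pi (3 * Real.pi / 2) ∧
      (∀ θ ∈ Set.Ioo (Real.pi/2) (3 * Real.pi / 2), (F θ = 0 ↔ θ = θr)) ∧
      (∀ θ ∈ Set.Ioo θl θr, 0 < F θ) ∧
      Tendsto g (nhdsWithin θl (Set.Ioi θl)) atTop ∧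
      Tendsto g (nhdsWithin θr (Set.Iio θr)) atTop := by
  replace hF : F = perturbedSine κ c e := hF
  subst hF hg
  have hπ := pi_pos
  have hed : Differentiable ℝ e := he.differentiable (by norm_num)
  have he₀ θ : |e θ| ≤ 1/100 := by
    linarith [hbd θ, abs_nonneg (deriv e θ), abs_nonneg (deriv (deriv e) θ)]
  have he₁ θ : |deriv e θ| ≤ 1/100 := by
    linarith [hbd θ, abs_nonneg (e θ), abs_nonneg (deriv (deriv e) θ)]
  obtain ⟨θl, hθl, hzero_l, hpos_l⟩ := exists_unique_zero_perturbedSine hc.1 hκ hed he₀ he₁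
  obtain ⟨θ', hθ', hzero', hpos'⟩ := exists_unique_zero_perturbedSine (e := fun θ => e (π - θ))
    hc.1 hκ (hed.comp (by fun_prop)) (fun _ => he₀ _)
    (fun θ => by simpa only [deriv_comp_const_sub, abs_neg] using he₁ (π - θ))
  simp only [perturbedSine_comp_pi_sub] at hzero' hpos'
  have hpos : ∀ θ ∈ Ioo θl (π - θ'), 0 < perturbedSine κ c e θ := fun θ hθ =>
    (lt_or_ge θ π).elim (fun h => hpos_l θ ⟨hθ.1, h⟩) fun h => by
      simpa only [sub_sub_cancel] using hpos' (π - θ) ⟨by linarith [hθ.2], by linarith⟩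
  have hFl : perturbedSine κ c e θl = 0 := (hzero_l θl ⟨hθl.1, by linarith [hθl.2]⟩).mpr rfl
  have hFr : perturbedSine κ c e (π - θ') = 0 := (hzero' θ' ⟨hθ'.1, by linarith [hθ'.2]⟩).mpr rfl
  have hcont : Continuous (perturbedSine κ c e) := continuous_perturbedSine hed.continuous
  refine ⟨θl, π - θ', hθl, hzero_l, ⟨by linarith [hθ'.2], by linarith [hθ'.1]⟩, fun θ hθ => ?_,
    hpos, ?_, ?_⟩
  · rw [← sub_sub_cancel π θ, hzero' (π - θ) ⟨by linarith [hθ.2], by linarith [hθ.1]⟩]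
    constructor <;> intro h <;> linarith
  · exact tendsto_add_sub_mul_log_atTop a nhdsWithin_le_nhds hcont.continuousAt hFl
      (eventually_of_mem (Ioo_mem_nhdsGT (by linarith [hθl.2, hθ'.2])) hpos) (by linarith)
  · exact tendsto_add_sub_mul_log_atTop a nhdsWithin_le_nhds hcont.continuousAt hFr
      (eventually_of_mem (Ioo_mem_nhdsLT (by linarith [hθl.2, hθ'.2])) hpos) (by linarith)
end

section
/- Let θ_l ∈ (−π/2, 0) and θ_r ∈ (π, 3π/2) be the unique zeros of F in (−π/2, π/2) and (π/2, 3π/2) respectively, so that F > 0 on (θ_l, θ_r). Then g″(θ) > 0 for every θ ∈ (θ_l, θ_r); moreover g′(θ) → −∞ as θ → θ_l from the right and g′(θ) → +∞ as θ → θ_r from the left; consequently there is exactly one point θ_c ∈ (θ_l, θ_r) with g′(θ_c) = 0. -/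
open Filter

/-!
Since g′ = 1 − d F′/F, we get g″ = d (F′² − F F″)/F². Expanding with F′ = c cos θ + e′ and
F″ = −c sin θ + e″, the quantity F′² − F F″ equals c² + κ c sin θ ≥ c (c − κ) ≥ 1 up to error
terms of total size below 1/2, so it is positive everywhere and g′ is strictly increasing on
(θ_l, θ_r). At a zero of F the same bound reads F′² > 0, so F′ does not vanish there; as F is
positive inside the interval, F′(θ_l) > 0 > F′(θ_r), and g′ tends to −∞ and +∞ at the two ends.
A continuous strictly increasing function with these limits has exactly one zero.
-/

open Real Set Topology

theorem HasDerivAt.nonneg_of_eq_zero_of_pos_right {f : ℝ → ℝ} {f' x : ℝ} (h : HasDerivAt f f' x)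
    (hx : f x = 0) (hpos : ∀ᶠ y in 𝓝[>] x, 0 < f y) : 0 ≤ f' := by
  refine ge_of_tendsto (hasDerivAt_iff_tendsto_slope_left_right.mp h).2 ?_
  filter_upwards [hpos, self_mem_nhdsWithin] with y hy hxy
  rw [slope_def_field, hx, sub_zero]
  exact div_nonneg hy.le (sub_nonneg.mpr (le_of_lt hxy))

theorem HasDerivAt.nonpos_of_eq_zero_of_pos_left {f : ℝ → ℝ} {f' x : ℝ} (h : HasDerivAt f f' x)
    (hx : f x = 0) (hpos : ∀ᶠ y in 𝓝[<] x, 0 < f y) : f' ≤ 0 := by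
  refine le_of_tendsto (hasDerivAt_iff_tendsto_slope_left_right.mp h).1 ?_
  filter_upwards [hpos, self_mem_nhdsWithin] with y hy hyx
  rw [slope_def_field, hx, sub_zero]
  exact div_nonpos_of_nonneg_of_nonpos hy.le (sub_nonpos.mpr (le_of_lt hyx))

theorem existsUnique_mem_Ioo_eq_of_strictMonoOn {f : ℝ → ℝ} {l r : ℝ} (hlr : l < r)
    (hcont : ContinuousOn f (Ioo l r)) (hmono : StrictMonoOn f (Ioo l r))
    (hl : Tendsto f (𝓝[>] l) atBot) (hr : Tendsto f (𝓝[<] r) atTop) (y : ℝ) :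
    ∃! x, x ∈ Ioo l r ∧ f x = y := by
  obtain ⟨x, hx, rfl⟩ := hcont.surjOn_of_tendsto (nonempty_Ioo.mpr hlr)
    ((tendsto_comp_coe_Ioo_atBot hlr).mpr hl) ((tendsto_comp_coe_Ioo_atTop hlr).mpr hr)
    (mem_univ y)
  exact ⟨x, ⟨hx, rfl⟩, fun x' hx' => hmono.injOn hx'.1 hx hx'.2⟩

noncomputable def angularMap (a d : ℝ) (F : ℝ → ℝ) (θ : ℝ) : ℝ := θ + a - d * log (F θ)

section AngularMap

variable {F F' F'' : ℝ → ℝ} {a d l r : ℝ}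

theorem hasDerivAt_angularMap {x : ℝ} (hF : HasDerivAt F (F' x) x) (hx : F x ≠ 0) :
    HasDerivAt (angularMap a d F) (1 - d * (F' x / F x)) x :=
  ((hasDerivAt_id x).add_const a).sub ((hF.log hx).const_mul d)

theorem deriv_angularMap_eventuallyEq (hF : ∀ x, HasDerivAt F (F' x) x) {x : ℝ} (hx : F x ≠ 0) :
    deriv (angularMap a d F) =ᶠ[𝓝 x] fun θ => 1 - d * (F' θ / F θ) := by
  filter_upwards [(hF x).continuousAt.eventually_ne hx] with y hy
  exact (hasDerivAt_angularMap (hF y) hy).deriv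

theorem hasDerivAt_deriv_angularMap (hF : ∀ x, HasDerivAt F (F' x) x)
    (hF' : ∀ x, HasDerivAt F' (F'' x) x) {x : ℝ} (hx : F x ≠ 0) :
    HasDerivAt (deriv (angularMap a d F)) (d * ((F' x ^ 2 - F x * F'' x) / F x ^ 2)) x := by
  refine HasDerivAt.congr_of_eventuallyEq ?_ (deriv_angularMap_eventuallyEq hF hx)
  refine ((((hF' x).fun_div (hF x) hx).const_mul d).const_sub 1).congr_deriv ?_
  field_simp
  ring

theorem deriv_deriv_angularMap_pos (hd : 0 < d) (hF : ∀ x, HasDerivAt F (F' x) x)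
    (hF' : ∀ x, HasDerivAt F' (F'' x) x) (hmargin : ∀ x, 0 < F' x ^ 2 - F x * F'' x)
    {x : ℝ} (hx : 0 < F x) : 0 < deriv (deriv (angularMap a d F)) x := by
  rw [(hasDerivAt_deriv_angularMap hF hF' hx.ne').deriv]
  exact mul_pos hd (div_pos (hmargin x) (pow_pos hx 2))

theorem tendsto_deriv_angularMap_nhdsGT (hd : 0 < d) (hF : ∀ x, HasDerivAt F (F' x) x)
    (hF' : ∀ x, HasDerivAt F' (F'' x) x) (hmargin : ∀ x, 0 < F' x ^ 2 - F x * F'' x)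
    (hlr : l < r) (hFl : F l = 0) (hpos : ∀ x ∈ Ioo l r, 0 < F x) :
    Tendsto (deriv (angularMap a d F)) (𝓝[>] l) atBot := by
  have hpos_right : ∀ᶠ x in 𝓝[>] l, 0 < F x := by
    filter_upwards [Ioo_mem_nhdsGT hlr] using hpos
  have hF'l : 0 < F' l := by
    refine ((hF l).nonneg_of_eq_zero_of_pos_right hFl hpos_right).lt_of_ne' fun h => ?_
    simpa [h, hFl] using hmargin l
  have hF_to : Tendsto F (𝓝[>] l) (𝓝[>] 0) :=
    tendsto_nhdsWithin_iff.mpr ⟨hFl ▸ (hF l).continuousAt.tendsto.mono_left nhdsWithin_le_nhds,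
      hpos_right⟩
  have hquot : Tendsto (fun θ => d * (F' θ / F θ)) (𝓝[>] l) atTop :=
    (((hF' l).continuousAt.tendsto.mono_left nhdsWithin_le_nhds).pos_mul_atTop hF'l
      hF_to.inv_tendsto_nhdsGT_zero).const_mul_atTop hd
  refine (tendsto_atBot_add_const_left _ 1 (tendsto_neg_atTop_atBot.comp hquot)).congr' ?_
  filter_upwards [hpos_right] with x hx
  exact ((hasDerivAt_angularMap (hF x) hx.ne').deriv).symm

theorem tendsto_deriv_angularMap_nhdsLT (hd : 0 < d) (hF : ∀ x, HasDerivAt F (F' x) x)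
    (hF' : ∀ x, HasDerivAt F' (F'' x) x) (hmargin : ∀ x, 0 < F' x ^ 2 - F x * F'' x)
    (hlr : l < r) (hFr : F r = 0) (hpos : ∀ x ∈ Ioo l r, 0 < F x) :
    Tendsto (deriv (angularMap a d F)) (𝓝[<] r) atTop := by
  have hpos_left : ∀ᶠ x in 𝓝[<] r, 0 < F x := by
    filter_upwards [Ioo_mem_nhdsLT hlr] using hpos
  have hF'r : F' r < 0 := by
    refine ((hF r).nonpos_of_eq_zero_of_pos_left hFr hpos_left).lt_of_ne fun h => ?_
    simpa [h, hFr] using hmargin r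
  have hF_to : Tendsto F (𝓝[<] r) (𝓝[>] 0) :=
    tendsto_nhdsWithin_iff.mpr ⟨hFr ▸ (hF r).continuousAt.tendsto.mono_left nhdsWithin_le_nhds,
      hpos_left⟩
  have hquot : Tendsto (fun θ => d * (F' θ / F θ)) (𝓝[<] r) atBot :=
    (((hF' r).continuousAt.tendsto.mono_left nhdsWithin_le_nhds).neg_mul_atTop hF'r
      hF_to.inv_tendsto_nhdsGT_zero).const_mul_atBot hd
  refine (tendsto_atTop_add_const_left _ 1 (tendsto_neg_atBot_atTop.comp hquot)).congr' ?_
  filter_upwards [hpos_left] with x hx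
  exact ((hasDerivAt_angularMap (hF x) hx.ne').deriv).symm

theorem existsUnique_deriv_angularMap_eq_zero (hd : 0 < d) (hF : ∀ x, HasDerivAt F (F' x) x)
    (hF' : ∀ x, HasDerivAt F' (F'' x) x) (hmargin : ∀ x, 0 < F' x ^ 2 - F x * F'' x)
    (hlr : l < r) (hFl : F l = 0) (hFr : F r = 0) (hpos : ∀ x ∈ Ioo l r, 0 < F x) :
    ∃! x, x ∈ Ioo l r ∧ deriv (angularMap a d F) x = 0 := by
  have hcont : ContinuousOn (deriv (angularMap a d F)) (Ioo l r) := fun x hx =>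
    (hasDerivAt_deriv_angularMap hF hF' (hpos x hx).ne').continuousAt.continuousWithinAt
  have hmono : StrictMonoOn (deriv (angularMap a d F)) (Ioo l r) :=
    strictMonoOn_of_deriv_pos (convex_Ioo l r) hcont fun x hx =>
      deriv_deriv_angularMap_pos hd hF hF' hmargin (hpos x (interior_subset hx))
  exact existsUnique_mem_Ioo_eq_of_strictMonoOn hlr hcont hmono
    (tendsto_deriv_angularMap_nhdsGT hd hF hF' hmargin hlr hFl hpos)
    (tendsto_deriv_angularMap_nhdsLT hd hF hF' hmargin hlr hFr hpos) 0

end AngularMap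

theorem half_le_sq_sub_mul_of_perturbed_sin (c κ θ E E' E'' : ℝ) (hc2 : 2 ≤ c) (hc10 : c ≤ 10)
    (hκ1 : 1/2 ≤ κ) (hκ2 : κ ≤ 3/2)
    (hE : |E| ≤ 1/100) (hE' : |E'| ≤ 1/100) (hE'' : |E''| ≤ 1/100) :
    1/2 ≤ (c * cos θ + E') ^ 2 - (κ + c * sin θ + E) * (-(c * sin θ) + E'') := by
  have hc0 : 0 ≤ c := by linarith
  have hsin := abs_sin_le_one θ
  have hcos := abs_cos_le_one θ
  have hmain : 1 ≤ c ^ 2 + κ * (c * sin θ) := by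
    nlinarith [neg_one_le_sin θ, mul_nonneg (mul_nonneg (by linarith : (0:ℝ) ≤ κ) hc0)
      (by linarith [neg_one_le_sin θ] : (0:ℝ) ≤ 1 + sin θ)]
  have hcs : |c * sin θ| ≤ 10 := by
    rw [abs_mul, abs_of_nonneg hc0]; nlinarith [abs_nonneg (sin θ)]
  have hcc : |c * cos θ| ≤ 10 := by
    rw [abs_mul, abs_of_nonneg hc0]; nlinarith [abs_nonneg (cos θ)]
  have h1 : |c * cos θ * E'| ≤ 1/10 := by
    rw [abs_mul]; nlinarith [abs_nonneg E', abs_nonneg (c * cos θ)]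
  have h2 : |c * sin θ * (E - E'')| ≤ 1/5 := by
    rw [abs_mul]; nlinarith [abs_sub E E'', abs_nonneg (E - E''), abs_nonneg (c * sin θ)]
  have h3 : |(κ + E) * E''| ≤ 1/50 := by
    rw [abs_mul]
    nlinarith [abs_add_le κ E, abs_of_pos (by linarith : (0:ℝ) < κ), abs_nonneg E'',
      abs_nonneg (κ + E)]
  rw [abs_le] at h1 h2 h3
  nlinarith [sq_nonneg E', sin_sq_add_cos_sq θ]

theorem stmt5_general (c d κ a : ℝ) (hc : c ∈ Set.Icc (2:ℝ) 10) (hd : 100 ≤ d)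
    (hκ : κ ∈ Set.Icc (1/2 : ℝ) (3/2)) (e : ℝ → ℝ) (he : ContDiff ℝ 2 e)
    (hbd : ∀ θ, |e θ| + |deriv e θ| + |deriv (deriv e) θ| ≤ 1/100)
    (F g : ℝ → ℝ) (hF : F = fun θ => κ + c * Real.sin θ + e θ)
    (hg : g = fun θ => θ + a - d * Real.log (F θ))
    (θl θr : ℝ)
    (hθl : θl ∈ Set.Ioo (-(Real.pi/2)) 0) (hθr : θr ∈ Set.Ioo Real.pi (3 * Real.pi / 2))
    (hFl : F θl = 0) (hFr : F θr = 0)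
    (hFpos : ∀ θ ∈ Set.Ioo θl θr, 0 < F θ) :
    (∀ θ ∈ Set.Ioo θl θr, 0 < deriv (deriv g) θ) ∧
    Tendsto (deriv g) (nhdsWithin θl (Set.Ioi θl)) atBot ∧
    Tendsto (deriv g) (nhdsWithin θr (Set.Iio θr)) atTop ∧
    (∃! θc : ℝ, θc ∈ Set.Ioo θl θr ∧ deriv g θc = 0) := by
  obtain ⟨hc2, hc10⟩ := hc
  obtain ⟨hκ1, hκ2⟩ := hκ
  have hd0 : 0 < d := by linarith
  have hlr : θl < θr := by linarith [hθl.2, hθr.1, pi_pos]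
  have hFd : ∀ θ, HasDerivAt F (c * cos θ + deriv e θ) θ := fun θ => by
    subst hF
    exact (((hasDerivAt_sin θ).const_mul c).const_add κ).add
      ((he.differentiable two_ne_zero) θ).hasDerivAt
  have hF'd : ∀ θ, HasDerivAt (fun θ => c * cos θ + deriv e θ)
      (-(c * sin θ) + deriv (deriv e) θ) θ := fun θ =>
    (((hasDerivAt_cos θ).const_mul c).add
      ((he.deriv' (n := 1)).differentiable one_ne_zero θ).hasDerivAt).congr_deriv (by ring)
  have hmargin : ∀ θ, 0 < (c * cos θ + deriv e θ) ^ 2 -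
      F θ * (-(c * sin θ) + deriv (deriv e) θ) := fun θ => by
    have h0 := abs_nonneg (e θ)
    have h1 := abs_nonneg (deriv e θ)
    have h2 := abs_nonneg (deriv (deriv e) θ)
    have hhalf := half_le_sq_sub_mul_of_perturbed_sin c κ θ (e θ) (deriv e θ) (deriv (deriv e) θ)
      hc2 hc10 hκ1 hκ2 (by linarith [hbd θ]) (by linarith [hbd θ]) (by linarith [hbd θ])
    rw [hF]
    linarith
  obtain rfl : g = angularMap a d F := hg
  exact ⟨fun θ hθ => deriv_deriv_angularMap_pos hd0 hFd hF'd hmargin (hFpos θ hθ),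
    tendsto_deriv_angularMap_nhdsGT hd0 hFd hF'd hmargin hlr hFl hFpos,
    tendsto_deriv_angularMap_nhdsLT hd0 hFd hF'd hmargin hlr hFr hFpos,
    existsUnique_deriv_angularMap_eq_zero hd0 hFd hF'd hmargin hlr hFl hFr hFpos⟩

/-- Convexity of g on (θ_l, θ_r), blow-up of g′ at both ends, and the unique
critical point θ_c of the angular component g of the return map. -/
theorem stmt5 (c d κ a : ℝ) (hc : c ∈ Set.Icc (2:ℝ) 10) (hd : 100 ≤ d)
    (hκ : κ ∈ Set.Icc (1/2 : ℝ) (3/2)) (e : ℝ → ℝ) (he : ContDiff ℝ 2 e)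
    (hbd : ∀ θ, |e θ| + |deriv e θ| + |deriv (deriv e) θ| ≤ 1/100)
    (F g : ℝ → ℝ) (hF : F = fun θ => κ + c * Real.sin θ + e θ)
    (hg : g = fun θ => θ + a - d * Real.log (F θ))
    (θl θr : ℝ)
    (hθl : θl ∈ Set.Ioo (-(Real.pi/2)) 0) (hθr : θr ∈ Set.Ioo Real.pi (3 * Real.pi / 2))
    (hFl : F θl = 0) (hFr : F θr = 0)
    (hluniq : ∀ θ ∈ Set.Ioo (-(Real.pi/2)) (Real.pi/2), F θ = 0 → θ = θl)
    (hruniq : ∀ θ ∈ Set.Ioo (Real.pi/2) (3 * Real.pi / 2), F θ = 0 → θ = θr)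
    (hFpos : ∀ θ ∈ Set.Ioo θl θr, 0 < F θ) :
    (∀ θ ∈ Set.Ioo θl θr, 0 < deriv (deriv g) θ) ∧
    Tendsto (deriv g) (nhdsWithin θl (Set.Ioi θl)) atBot ∧
    Tendsto (deriv g) (nhdsWithin θr (Set.Iio θr)) atTop ∧
    (∃! θc : ℝ, θc ∈ Set.Ioo θl θr ∧ deriv g θc = 0) :=
  stmt5_general c d κ a hc hd hκ e he hbd F g hF hg θl θr hθl hθr hFl hFr hFpos
end

section
/- Let θ_l ∈ (−π/2, 0) and θ_r ∈ (π, 3π/2) be the unique zeros of F in (−π/2, π/2) and (π/2, 3π/2) respectively, so that F > 0 on (θ_l, θ_r). Then for every θ ∈ (θ_l, θ_r), if |g′(θ)| ≤ 2 then |cos θ| ≤ 6/d + 1/100. -/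
/-!
Since `g′ = 1 - d F′/F`, the bound `|g′| ≤ 2` forces `d |F′| ≤ 3 F`. As `F′ = c cos θ + e′` with
`|e′| ≤ 1/100` and `F ≤ κ + c + 1/100`, dividing by `c ≥ 2` leaves `|cos θ| ≤ 6/d + 1/100`.
-/

open Real

theorem hasDerivAt_add_const_sub_mul_log {F : ℝ → ℝ} {F' x : ℝ} (a d : ℝ)
    (hF : HasDerivAt F F' x) (hx : F x ≠ 0) :
    HasDerivAt (fun θ => θ + a - d * log (F θ)) (1 - d * (F' / F x)) x :=
  ((hasDerivAt_id x).add_const a).sub ((hF.log hx).const_mul d)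

theorem mul_abs_le_of_abs_one_sub_mul_div_le_two {d x y : ℝ} (hd : 0 < d) (hy : 0 < y)
    (h : |1 - d * (x / y)| ≤ 2) : d * |x| ≤ 3 * y := by
  have hq : |d * (x / y)| ≤ 3 := by
    calc |d * (x / y)| = |1 - (1 - d * (x / y))| := by ring_nf
      _ ≤ |(1 : ℝ)| + |1 - d * (x / y)| := abs_sub _ _
      _ ≤ 3 := by norm_num; linarith
  rw [abs_mul, abs_div, abs_of_pos hd, abs_of_pos hy, mul_div_assoc', div_le_iff₀ hy] at hq
  exact hq

theorem abs_le_of_mul_abs_mul_add_le {c d κ s t δ ε : ℝ} (hc : 2 ≤ c) (hd : 0 < d)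
    (hκ : κ ≤ 3 / 2) (hs : s ≤ 1) (hδ : |δ| ≤ 1 / 100) (hε : |ε| ≤ 1 / 100)
    (h : d * |c * t + δ| ≤ 3 * (κ + c * s + ε)) : |t| ≤ 6 / d + 1 / 100 := by
  have hct : c * |t| ≤ |c * t + δ| + 1 / 100 := by
    calc c * |t| = |c * t + δ - δ| := by
          rw [add_sub_cancel_right, abs_mul, abs_of_pos (by linarith : 0 < c)]
      _ ≤ |c * t + δ| + |δ| := abs_sub _ _
      _ ≤ |c * t + δ| + 1 / 100 := by linarith
  have hε' : ε ≤ 1 / 100 := (abs_le.mp hε).2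
  rw [div_add' _ _ _ hd.ne', le_div_iff₀ hd]
  nlinarith [mul_le_mul_of_nonneg_left hct hd.le, abs_nonneg t, mul_nonneg (abs_nonneg t) hd.le]

theorem stmt6_general (c d κ a : ℝ) (hc : c ∈ Set.Icc (2:ℝ) 10) (hd : 100 ≤ d)
    (hκ : κ ∈ Set.Icc (1/2 : ℝ) (3/2)) (e : ℝ → ℝ) (he : ContDiff ℝ 2 e)
    (hbd : ∀ θ, |e θ| + |deriv e θ| + |deriv (deriv e) θ| ≤ 1/100)
    (F g : ℝ → ℝ) (hF : F = fun θ => κ + c * Real.sin θ + e θ)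
    (hg : g = fun θ => θ + a - d * Real.log (F θ))
    (θl θr : ℝ)
    (hFpos : ∀ θ ∈ Set.Ioo θl θr, 0 < F θ) :
    ∀ θ ∈ Set.Ioo θl θr, |deriv g θ| ≤ 2 → |Real.cos θ| ≤ 6 / d + 1/100 := by
  intro θ hθ hsmall
  have hFθ : 0 < F θ := hFpos θ hθ
  have hF' : HasDerivAt F (c * cos θ + deriv e θ) θ := by
    rw [hF]
    exact (((hasDerivAt_sin θ).const_mul c).const_add κ).add
      ((he.differentiable (by norm_num)).differentiableAt.hasDerivAt)
  have hg' := hasDerivAt_add_const_sub_mul_log a d hF' hFθ.ne'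
  rw [hg, hg'.deriv] at hsmall
  have hbound := mul_abs_le_of_abs_one_sub_mul_div_le_two (by linarith) hFθ hsmall
  rw [hF] at hbound
  have hbdθ := hbd θ
  exact abs_le_of_mul_abs_mul_add_le hc.1 (by linarith) hκ.2 (sin_le_one θ)
    (by linarith [abs_nonneg (e θ), abs_nonneg (deriv (deriv e) θ)])
    (by linarith [abs_nonneg (deriv e θ), abs_nonneg (deriv (deriv e) θ)]) hbound

/-- Bound on |cos θ| in the fold region where the angular derivative of the
return map is small: if |g′(θ)| ≤ 2 then |cos θ| ≤ 6/d + 1/100. -/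
theorem stmt6 (c d κ a : ℝ) (hc : c ∈ Set.Icc (2:ℝ) 10) (hd : 100 ≤ d)
    (hκ : κ ∈ Set.Icc (1/2 : ℝ) (3/2)) (e : ℝ → ℝ) (he : ContDiff ℝ 2 e)
    (hbd : ∀ θ, |e θ| + |deriv e θ| + |deriv (deriv e) θ| ≤ 1/100)
    (F g : ℝ → ℝ) (hF : F = fun θ => κ + c * Real.sin θ + e θ)
    (hg : g = fun θ => θ + a - d * Real.log (F θ))
    (θl θr : ℝ)
    (hθl : θl ∈ Set.Ioo (-(Real.pi/2)) 0) (hθr : θr ∈ Set.Ioo Real.pi (3 * Real.pi / 2))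
    (hFl : F θl = 0) (hFr : F θr = 0)
    (hluniq : ∀ θ ∈ Set.Ioo (-(Real.pi/2)) (Real.pi/2), F θ = 0 → θ = θl)
    (hruniq : ∀ θ ∈ Set.Ioo (Real.pi/2) (3 * Real.pi / 2), F θ = 0 → θ = θr)
    (hFpos : ∀ θ ∈ Set.Ioo θl θr, 0 < F θ) :
    ∀ θ ∈ Set.Ioo θl θr, |deriv g θ| ≤ 2 → |Real.cos θ| ≤ 6 / d + 1/100 :=
  stmt6_general c d κ a hc hd hκ e he hbd F g hF hg θl θr hFpos
end

section
/- Let (θ, z) ∈ V and suppose that either (Case 1) F(θ,z) ≥ √k and |1 − d·F_θ(θ,z)/F(θ,z)| ≥ 2, or (Case 2) F(θ,z) < √k. Then for every vector (u, v) ∈ ℝ² with u ≠ 0 and |v/u| ≤ 1/100, the image (u₁, v₁) = DT(θ,z)·(u, v) satisfies u₁ ≠ 0 and |v₁/u₁| ≤ 1/100. (That is, the differential of T maps the horizontal cone of slopes at most 1/100 into itself at every point outside the fold region.) -/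
/-!
Writing `W = F_θ u + F_z v`, the differential is `DT (u, v) = (u - (d / F) W, b γ F^(γ-1) W)`.
Since `γ b 12^γ` is tiny and `F ≤ 12`, the second component is at most `|u| / 100`, so it suffices
that `|u| ≤ |u₁|`. Off the fold, the coefficient of `u` in `u₁` has size `≥ 2` while that of `v` is
at most `(3/2) d √k`. Near the fold, `F < √k` forces `1 + c sin θ ≈ 0`, hence `|cos θ| ≥ 4/5` and
`|F_θ| ≥ 1`, and then the huge factor `d / F` makes `|u₁| ≥ |u|`.
-/

open Real

def horizontalCone (ε : ℝ) : Set (ℝ × ℝ) := {p | p.1 ≠ 0 ∧ |p.2 / p.1| ≤ ε}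

section Slopes

variable {ε u v u₁ v₁ : ℝ}

lemma abs_le_mul_abs_of_abs_div_le (hu : u ≠ 0) (h : |v / u| ≤ ε) : |v| ≤ ε * |u| := by
  rwa [abs_div, div_le_iff₀ (abs_pos.mpr hu)] at h

lemma mk_mem_horizontalCone (hu : u ≠ 0) (hexp : |u| ≤ |u₁|) (hv₁ : |v₁| ≤ ε * |u|) :
    (u₁, v₁) ∈ horizontalCone ε := by
  have hu₁ : 0 < |u₁| := (abs_pos.mpr hu).trans_le hexp
  refine ⟨abs_pos.mp hu₁, ?_⟩
  rw [abs_div, div_le_iff₀ hu₁]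
  have : 0 ≤ ε := nonneg_of_mul_nonneg_left ((abs_nonneg _).trans hv₁) (abs_pos.mpr hu)
  nlinarith

lemma le_abs_mul_add_mul {A B : ℝ} (hA : 2 ≤ |A|) (hB : |B| * ε ≤ 1) (hv : |v| ≤ ε * |u|) :
    |u| ≤ |A * u + B * v| := by
  have hBv : |B * v| ≤ |u| := by
    rw [abs_mul]
    nlinarith [abs_nonneg B, abs_nonneg u]
  have := abs_sub_abs_le_abs_sub (A * u) (-(B * v))
  rw [abs_neg, sub_neg_eq_add, abs_mul] at this
  nlinarith [abs_nonneg u]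

end Slopes

lemma four_fifths_le_abs_cos {x : ℝ} (h : |sin x| ≤ 3 / 5) : 4 / 5 ≤ |cos x| := by
  have hsin : sin x ^ 2 ≤ (3 / 5) ^ 2 := by rw [← sq_abs]; gcongr
  have hcos : (4 / 5) ^ 2 ≤ |cos x| ^ 2 := by rw [sq_abs]; nlinarith [sin_sq_add_cos_sq x]
  exact (pow_le_pow_iff_left₀ (by norm_num) (abs_nonneg _) two_ne_zero).mp hcos

lemma one_le_abs_mul_cos_add_of_fold {c x e : ℝ} (hc : 2 ≤ c) (hfold : |1 + c * sin x| ≤ 1 / 5)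
    (he : |e| ≤ 1 / 50) : 1 ≤ |c * cos x + e| := by
  have hc0 : 0 < c := by linarith
  have hsin : |sin x| ≤ 3 / 5 := by
    have h := abs_sub_abs_le_abs_sub (c * sin x) (-1)
    rw [abs_neg, abs_one, sub_neg_eq_add, add_comm, abs_mul, abs_of_pos hc0] at h
    nlinarith [abs_nonneg (sin x)]
  have hcos : 8 / 5 ≤ |c * cos x| := by
    rw [abs_mul, abs_of_pos hc0]
    nlinarith [four_fifths_le_abs_cos hsin]
  have h := abs_sub_abs_le_abs_sub (c * cos x) (-e)
  rw [abs_neg, sub_neg_eq_add] at h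
  linarith

section ModelMap

variable {d γ k b F Fθ Fz u v : ℝ}

lemma sqrt_le_of_mul_sqrt_le (hd : 100 ≤ d) (hdk : d * √k ≤ 1 / 100) : √k ≤ 1 / 10000 := by
  nlinarith [sqrt_nonneg k]

lemma le_abs_sub_of_steep (hk : 0 < k) (hd : 0 ≤ d) (hdk : d * √k ≤ 1 / 100) (hF : √k ≤ F)
    (hFz : |Fz| ≤ 3 / 2 * k) (hA : 2 ≤ |1 - d * Fθ / F|) (hv : |v| ≤ 1 / 100 * |u|) :
    |u| ≤ |u - d / F * (Fθ * u + Fz * v)| := by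
  have hsk : 0 < √k := sqrt_pos.mpr hk
  have hF0 : 0 < F := hsk.trans_le hF
  have hB : |-(d * Fz / F)| * (1 / 100) ≤ 1 := by
    rw [abs_neg, abs_div, abs_mul, abs_of_nonneg hd, abs_of_pos hF0, div_mul_eq_mul_div,
      div_le_one hF0]
    have hkk : k = √k * √k := (mul_self_sqrt hk.le).symm
    nlinarith [mul_le_mul_of_nonneg_left hFz hd, abs_nonneg Fz]
  convert le_abs_mul_add_mul hA hB hv using 2
  field_simp
  ring

lemma le_abs_sub_of_fold (hd : 100 ≤ d) (hF : 0 < F) (hF1 : F ≤ 1) (hFθ : 1 ≤ |Fθ|)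
    (hFz : |Fz| ≤ 1) (hv : |v| ≤ 1 / 100 * |u|) :
    |u| ≤ |u - d / F * (Fθ * u + Fz * v)| := by
  have hW : 1 / 2 * |u| ≤ |Fθ * u + Fz * v| := by
    have h := abs_sub_abs_le_abs_sub (Fθ * u) (-(Fz * v))
    rw [abs_neg, sub_neg_eq_add, abs_mul, abs_mul] at h
    nlinarith [abs_nonneg u, abs_nonneg v]
  have hdF : 100 ≤ d / F := by rw [le_div_iff₀ hF]; nlinarith
  have h := abs_sub_abs_le_abs_sub (d / F * (Fθ * u + Fz * v)) u
  rw [abs_sub_comm, abs_mul, abs_of_pos (by linarith)] at h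
  nlinarith [abs_nonneg u]

lemma abs_mul_rpow_mul_le (hγ : 1 ≤ γ) (hb : 0 ≤ b) (hF : 0 < F) (hF12 : F ≤ 12)
    (hγb : γ * b * 12 ^ γ ≤ 1 / 10000) {W : ℝ} (hW : |W| ≤ 12 * |u|) :
    |b * γ * F ^ (γ - 1) * W| ≤ 1 / 100 * |u| := by
  have hP : F ^ (γ - 1) ≤ 12 ^ γ / 12 := by
    rw [← rpow_sub_one (by norm_num)]
    exact rpow_le_rpow hF.le hF12 (by linarith)
  have hC : b * γ * F ^ (γ - 1) * 12 ≤ 1 / 10000 := by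
    calc b * γ * F ^ (γ - 1) * 12 ≤ b * γ * (12 ^ γ / 12) * 12 := by gcongr
      _ = γ * b * 12 ^ γ := by ring
      _ ≤ 1 / 10000 := hγb
  rw [abs_mul, abs_of_nonneg (by positivity)]
  nlinarith [abs_nonneg u, abs_nonneg W, rpow_nonneg hF.le (γ - 1),
    mul_le_mul_of_nonneg_left hW (by positivity : 0 ≤ b * γ * F ^ (γ - 1))]

end ModelMap

section Jacobian

variable {G : ℝ → ℝ → ℝ} {θ z Gθ Gz : ℝ}

lemma deriv_log_coord_apply (hθ : HasDerivAt (fun t => G t z) Gθ θ)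
    (hz : HasDerivAt (fun t => G θ t) Gz z) (hG : G θ z ≠ 0) (a d u v : ℝ) :
    deriv (fun t => t + a - d * log (G t z)) θ * u +
        deriv (fun t => θ + a - d * log (G θ t)) z * v =
      u - d / G θ z * (Gθ * u + Gz * v) := by
  rw [(((hasDerivAt_id' θ).add_const a).fun_sub ((hθ.log hG).const_mul d)).deriv,
    ((hasDerivAt_const z (θ + a)).fun_sub ((hz.log hG).const_mul d)).deriv]
  field_simp
  ring

lemma deriv_rpow_coord_apply (hθ : HasDerivAt (fun t => G t z) Gθ θ)
    (hz : HasDerivAt (fun t => G θ t) Gz z) (hG : G θ z ≠ 0) (b γ u v : ℝ) :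
    deriv (fun t => b * G t z ^ γ) θ * u + deriv (fun t => b * G θ t ^ γ) z * v =
      b * γ * G θ z ^ (γ - 1) * (Gθ * u + Gz * v) := by
  rw [((hθ.rpow_const (Or.inl hG)).const_mul b).deriv,
    ((hz.rpow_const (Or.inl hG)).const_mul b).deriv]
  ring

end Jacobian

section Partials

variable {E : ℝ → ℝ → ℝ} (hE : Differentiable ℝ (Function.uncurry E)) (c k θ z : ℝ)
include hE

lemma hasDerivAt_model_fst :
    HasDerivAt (fun t => 1 + c * sin t + k * z + E t z)
      (c * cos θ + deriv (fun t => E t z) θ) θ := by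
  have hEθ : DifferentiableAt ℝ (Function.uncurry E ∘ fun t => (t, z)) θ :=
    (hE (θ, z)).comp θ (differentiableAt_id.prodMk (differentiableAt_const z))
  exact (((hasDerivAt_sin θ).const_mul c).const_add 1).add_const (k * z) |>.fun_add
    hEθ.hasDerivAt

lemma hasDerivAt_model_snd :
    HasDerivAt (fun t => 1 + c * sin θ + k * t + E θ t)
      (k + deriv (fun t => E θ t) z) z := by
  have hEz : DifferentiableAt ℝ (Function.uncurry E ∘ fun t => (θ, t)) z :=
    (hE (θ, z)).comp z ((differentiableAt_const θ).prodMk differentiableAt_id)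
  have hkz : HasDerivAt (fun t => k * t) k z := by simpa using (hasDerivAt_id' z).const_mul k
  exact (hkz.const_add (1 + c * sin θ)).fun_add hEz.hasDerivAt

end Partials

section PointwiseCone

variable {d γ c k b θ z e eθ ez F Fθ Fz u v : ℝ}

lemma model_bounds (hc : c ∈ Set.Icc (2 : ℝ) 10) (hk : 0 ≤ k) (hk1 : k ≤ 1 / 2)
    (he : |e| + |eθ| ≤ 1 / 50) (hez : |ez| ≤ k / 2) (hz : z ∈ Set.Icc (-1 : ℝ) 1)
    (hF : F = 1 + c * sin θ + k * z + e) (hFθ : Fθ = c * cos θ + eθ) (hFz : Fz = k + ez) :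
    F ≤ 12 ∧ |Fθ| ≤ 11 ∧ |Fz| ≤ 3 / 2 * k := by
  have hc0 : |c| ≤ 10 := abs_le.mpr ⟨by linarith [hc.1], hc.2⟩
  have hsin : |c * sin θ| ≤ 10 := by
    rw [abs_mul]; nlinarith [abs_sin_le_one θ, abs_nonneg c, abs_nonneg (sin θ)]
  have hcos : |c * cos θ| ≤ 10 := by
    rw [abs_mul]; nlinarith [abs_cos_le_one θ, abs_nonneg c, abs_nonneg (cos θ)]
  have hkz : |k * z| ≤ k := by
    rw [abs_mul, abs_of_nonneg hk]
    exact mul_le_of_le_one_right hk (abs_le.mpr hz)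
  refine ⟨?_, ?_, ?_⟩
  · rw [hF]; linarith [le_abs_self (c * sin θ), le_abs_self (k * z), le_abs_self e, abs_nonneg eθ]
  · rw [hFθ]; linarith [abs_add_le (c * cos θ) eθ, abs_nonneg e]
  · rw [hFz]; linarith [abs_add_le k ez, abs_of_nonneg hk]

lemma model_jacobian_mem_horizontalCone (hd : 100 ≤ d) (hγ : 1 ≤ γ)
    (hc : c ∈ Set.Icc (2 : ℝ) 10) (hk : 0 < k) (hb : 0 ≤ b) (hdk : d * √k ≤ 1 / 100)
    (hγb : γ * b * 12 ^ γ ≤ 1 / 10000) (he : |e| + |eθ| ≤ 1 / 50) (hez : |ez| ≤ k / 2)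
    (hz : z ∈ Set.Icc (-1 : ℝ) 1) (hF : F = 1 + c * sin θ + k * z + e)
    (hFθ : Fθ = c * cos θ + eθ) (hFz : Fz = k + ez) (hFpos : 0 < F)
    (hcase : (√k ≤ F ∧ 2 ≤ |1 - d * Fθ / F|) ∨ F < √k) (hu : u ≠ 0) (hslope : |v / u| ≤ 1 / 100) :
    (u - d / F * (Fθ * u + Fz * v), b * γ * F ^ (γ - 1) * (Fθ * u + Fz * v)) ∈
      horizontalCone (1 / 100) := by
  have hsk := sqrt_le_of_mul_sqrt_le hd hdk
  have hk1 : k ≤ 1 / 100 := by nlinarith [mul_self_sqrt hk.le, sqrt_nonneg k]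
  obtain ⟨hF12, hFθ11, hFzk⟩ := model_bounds hc hk.le (by linarith) he hez hz hF hFθ hFz
  have hv := abs_le_mul_abs_of_abs_div_le hu hslope
  have hW : |Fθ * u + Fz * v| ≤ 12 * |u| := by
    have := abs_add_le (Fθ * u) (Fz * v)
    rw [abs_mul, abs_mul] at this
    nlinarith [abs_nonneg u, abs_nonneg v, abs_nonneg Fz]
  refine mk_mem_horizontalCone hu ?_ (abs_mul_rpow_mul_le hγ hb hFpos hF12 hγb hW)
  rcases hcase with ⟨hFk, hA⟩ | hFk
  · exact le_abs_sub_of_steep hk (by linarith) hdk hFk hFzk hA hv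
  · have hfold : |1 + c * sin θ| ≤ 1 / 5 := by
      have hkz : |k * z| ≤ k := by
        rw [abs_mul, abs_of_pos hk]
        exact mul_le_of_le_one_right hk.le (abs_le.mpr hz)
      rw [show 1 + c * sin θ = F - k * z - e by rw [hF]; ring]
      have hsub := abs_sub (F - k * z) e
      have hFkz := abs_sub F (k * z)
      rw [abs_of_pos hFpos] at hFkz
      linarith [abs_nonneg eθ]
    have hFθ1 : 1 ≤ |Fθ| :=
      hFθ ▸ one_le_abs_mul_cos_add_of_fold hc.1 hfold (by linarith [abs_nonneg e])
    exact le_abs_sub_of_fold hd hFpos (by linarith) hFθ1 (by linarith) hv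

end PointwiseCone

/-- Horizontal cone invariance for the differential of the infinitely wrapped
horseshoe map T(θ,z) = (θ + a - d ln F(θ,z), b F(θ,z)^γ) outside the fold region. -/
theorem stmt7 (d γ c a k b : ℝ) (E : ℝ → ℝ → ℝ)
    (hd : 100 ≤ d) (hγ : 1 < γ) (hc : c ∈ Set.Icc (2:ℝ) 10)
    (hk : 0 < k) (hb : 0 < b)
    (hdk : d * Real.sqrt k ≤ 1/100)
    (hγb : γ * b * (12:ℝ) ^ γ ≤ 1/10000)
    (hE : ContDiff ℝ 1 (Function.uncurry E))
    (hEbd : ∀ θ z : ℝ, |E θ z| + |deriv (fun t => E t z) θ| ≤ 1/50 ∧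
      |deriv (fun t => E θ t) z| ≤ k/2)
    (F T₁ T₂ : ℝ → ℝ → ℝ)
    (hF : F = fun θ z => 1 + c * Real.sin θ + k * z + E θ z)
    (hT₁ : T₁ = fun θ z => θ + a - d * Real.log (F θ z))
    (hT₂ : T₂ = fun θ z => b * (F θ z) ^ γ)
    (θ z : ℝ) (hz : z ∈ Set.Icc (-1:ℝ) 1) (hFpos : 0 < F θ z)
    (hcase : (Real.sqrt k ≤ F θ z ∧
        2 ≤ |1 - d * (deriv (fun t => F t z) θ) / F θ z|) ∨ F θ z < Real.sqrt k)
    (u v : ℝ) (hu : u ≠ 0) (hslope : |v / u| ≤ 1/100) :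
    deriv (fun t => T₁ t z) θ * u + deriv (fun t => T₁ θ t) z * v ≠ 0 ∧
    |(deriv (fun t => T₂ t z) θ * u + deriv (fun t => T₂ θ t) z * v) /
      (deriv (fun t => T₁ t z) θ * u + deriv (fun t => T₁ θ t) z * v)| ≤ 1/100 := by
  have hEdiff : Differentiable ℝ (Function.uncurry E) := hE.differentiable one_ne_zero
  have hFθ : HasDerivAt (fun t => F t z) (c * cos θ + deriv (fun t => E t z) θ) θ := by
    subst hF; exact hasDerivAt_model_fst hEdiff c k θ z
  have hFz : HasDerivAt (fun t => F θ t) (k + deriv (fun t => E θ t) z) z := by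
    subst hF; exact hasDerivAt_model_snd hEdiff c k θ z
  subst hT₁ hT₂
  rw [deriv_log_coord_apply hFθ hFz hFpos.ne', deriv_rpow_coord_apply hFθ hFz hFpos.ne']
  rw [hFθ.deriv] at hcase
  exact model_jacobian_mem_horizontalCone hd hγ.le hc hk hb.le hdk hγb (hEbd θ z).1 (hEbd θ z).2
    hz (by rw [hF]) rfl rfl hFpos hcase hu hslope
end

section
/- At every point of V one has det DT(θ,z) = γ·b·F(θ,z)^{γ−1}·F_z(θ,z) > 0, so DT(θ,z) is invertible. Moreover, if (θ, z) ∈ V satisfies either (Case 1) F(θ,z) ≥ √k and |1 − d·F_θ(θ,z)/F(θ,z)| ≥ 2, or (Case 2) F(θ,z) < √k, then for every nonzero vector (u, v) ∈ ℝ² with |v| ≥ 100·|u|, the preimage (u₋, v₋) = DT(θ,z)⁻¹·(u, v) satisfies |v₋| ≥ 100·|u₋|. (That is, the inverse differential maps the vertical cone into itself at every point outside the fold region.) -/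
/-! The Jacobian of `T` has entries `A = 1 - d F_θ / F`, `B = -d F_z / F`, `C = β F_θ`,
`D = β F_z` with `β = γ b F^(γ-1)`, so its determinant is `β F_z > 0`. By Cramer's rule
`DT⁻¹` preserves the cone `|v| ≥ 100 |u|` as soon as `|D| + 100 |B| + |C| / 100 ≤ |A|`.
Here `β ≤ γ b 12^γ / 12` is tiny and `F_z ≈ k`. Where `F ≥ √k` the term `100 |B|` is at most
`3/2`, below `|A| ≥ 2`. Where `F < √k` we are near the fold `c sin θ ≈ -1`, so
`|F_θ| ≥ 3/2`; multiplying by `F`, the inequality becomes `100 d F_z + … ≤ |F - d F_θ|`,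
and `d F_z ≲ d k ≤ √k / 100` while `|F - d F_θ| ≥ 149`. -/

open Real Set

lemma abs_mul_le_abs_of_cone {A B C D u v x y : ℝ} (hdet : 0 < A * D - B * C)
    (hcone : |D| + 100 * |B| + |C| / 100 ≤ |A|) (huv : 100 * |u| ≤ |v|)
    (h₁ : A * x + B * y = u) (h₂ : C * x + D * y = v) : 100 * |x| ≤ |y| := by
  have hx : (A * D - B * C) * x = D * u - B * v := by linear_combination D * h₁ - B * h₂
  have hy : (A * D - B * C) * y = A * v - C * u := by linear_combination A * h₂ - C * h₁
  have key : 100 * |D * u - B * v| ≤ |A * v - C * u| := by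
    have hu := abs_nonneg u
    calc 100 * |D * u - B * v| ≤ 100 * (|D| * |u| + |B| * |v|) := by
          grw [abs_sub _ _, abs_mul, abs_mul]
      _ ≤ |D| * |v| + 100 * |B| * |v| := by nlinarith [abs_nonneg D]
      _ ≤ |A| * |v| - |C| * |u| := by nlinarith [abs_nonneg C]
      _ ≤ |A * v - C * u| := by rw [← abs_mul, ← abs_mul]; exact abs_sub_abs_le_abs_sub _ _
  rw [← hx, ← hy, abs_mul, abs_mul, abs_of_pos hdet] at key
  nlinarith [abs_nonneg x]

section Derivatives

variable {f : ℝ → ℝ} {f' x : ℝ}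

lemma deriv_add_const_sub_mul_log (hf : HasDerivAt f f' x) (hx : f x ≠ 0) (a d : ℝ) :
    deriv (fun t => t + a - d * log (f t)) x = 1 - d * f' / f x :=
  (((hasDerivAt_id' x).add_const a).sub ((hf.log hx).const_mul d)).deriv.trans (by ring)

lemma deriv_const_sub_mul_log (hf : HasDerivAt f f' x) (hx : f x ≠ 0) (e d : ℝ) :
    deriv (fun t => e - d * log (f t)) x = -(d * f' / f x) := by
  rw [((hf.log hx).const_mul d).const_sub e |>.deriv, mul_div_assoc]

lemma deriv_const_mul_rpow (hf : HasDerivAt f f' x) (hx : f x ≠ 0) (b γ : ℝ) :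
    deriv (fun t => b * f t ^ γ) x = b * γ * f x ^ (γ - 1) * f' := by
  rw [((hf.rpow_const (Or.inl hx)).const_mul b).deriv]
  ring

lemma jacobian_entries_of_hasDerivAt {F : ℝ → ℝ → ℝ} {θ z P Q : ℝ}
    (hP : HasDerivAt (fun t => F t z) P θ) (hQ : HasDerivAt (fun t => F θ t) Q z)
    (hF : F θ z ≠ 0) (a d b γ : ℝ) :
    deriv (fun t => t + a - d * log (F t z)) θ = 1 - d * P / F θ z ∧
      deriv (fun t => θ + a - d * log (F θ t)) z = -(d * Q / F θ z) ∧
      deriv (fun t => b * F t z ^ γ) θ = b * γ * F θ z ^ (γ - 1) * P ∧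
      deriv (fun t => b * F θ t ^ γ) z = b * γ * F θ z ^ (γ - 1) * Q :=
  ⟨deriv_add_const_sub_mul_log hP hF a d, deriv_const_sub_mul_log hQ hF _ d,
    deriv_const_mul_rpow hP hF b γ, deriv_const_mul_rpow hQ hF b γ⟩

lemma jacobian_det_eq {F P Q : ℝ} (hF : F ≠ 0) (d b γ : ℝ) :
    (1 - d * P / F) * (b * γ * F ^ (γ - 1) * Q) - -(d * Q / F) * (b * γ * F ^ (γ - 1) * P)
      = γ * b * F ^ (γ - 1) * Q := by
  field_simp
  ring

end Derivatives

section Partials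

variable {𝕜 X Y Z : Type*} [NontriviallyNormedField 𝕜] [NormedAddCommGroup X] [NormedSpace 𝕜 X]
  [NormedAddCommGroup Y] [NormedSpace 𝕜 Y] [NormedAddCommGroup Z] [NormedSpace 𝕜 Z]
  {g : X → Y → Z}

lemma Differentiable.differentiableAt_uncurry_left (hg : Differentiable 𝕜 (Function.uncurry g))
    (x : X) (y : Y) : DifferentiableAt 𝕜 (fun t => g t y) x :=
  (hg (x, y)).comp (f := fun t => (t, y)) x (differentiableAt_id.prodMk (differentiableAt_const y))

lemma Differentiable.differentiableAt_uncurry_right (hg : Differentiable 𝕜 (Function.uncurry g))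
    (x : X) (y : Y) : DifferentiableAt 𝕜 (fun t => g x t) y :=
  (hg (x, y)).comp (f := fun t => (x, t)) y ((differentiableAt_const x).prodMk differentiableAt_id)

end Partials

section Horseshoe

variable {c k : ℝ} {E : ℝ → ℝ → ℝ}

lemma hasDerivAt_horseshoe_left (hE : Differentiable ℝ (Function.uncurry E)) (θ z : ℝ) :
    HasDerivAt (fun t => 1 + c * sin t + k * z + E t z)
      (c * cos θ + deriv (fun t => E t z) θ) θ :=
  ((((hasDerivAt_sin θ).const_mul c).const_add 1).add_const (k * z)).add
    (hE.differentiableAt_uncurry_left θ z).hasDerivAt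

lemma hasDerivAt_horseshoe_right (hE : Differentiable ℝ (Function.uncurry E)) (θ z : ℝ) :
    HasDerivAt (fun t => 1 + c * sin θ + k * t + E θ t)
      (k + deriv (fun t => E θ t) z) z :=
  ((((hasDerivAt_id' z).const_mul k).const_add (1 + c * sin θ)).add
    (hE.differentiableAt_uncurry_right θ z).hasDerivAt).congr_deriv (by rw [mul_one])

end Horseshoe

lemma horseshoe_le_twelve {c k θ z e : ℝ} (hc₀ : 0 ≤ c) (hc : c ≤ 10) (hk₀ : 0 ≤ k)
    (hk : k ≤ 1 / 100) (hz : z ≤ 1) (he : |e| ≤ 1 / 50) : 1 + c * sin θ + k * z + e ≤ 12 := by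
  nlinarith [sin_le_one θ, (abs_le.mp he).2]

lemma three_halves_le_abs_of_near_fold {c θ e : ℝ} (hc : 2 ≤ c) (hfold : |1 + c * sin θ| ≤ 3 / 100)
    (he : |e| ≤ 1 / 50) : 3 / 2 ≤ |c * cos θ + e| := by
  have hsin : |c * sin θ| ≤ 103 / 100 := by
    have := abs_le.mp hfold
    exact abs_le.mpr ⟨by linarith, by linarith⟩
  have hcos : (38 / 25) ^ 2 ≤ (c * cos θ) ^ 2 := by
    have hpyth : (c * cos θ) ^ 2 = c ^ 2 - (c * sin θ) ^ 2 := by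
      linear_combination c ^ 2 * cos_sq_add_sin_sq θ
    nlinarith [sq_abs (c * sin θ), abs_nonneg (c * sin θ)]
  have := sq_le_sq.mp hcos
  rw [abs_of_pos (by norm_num : (0 : ℝ) < 38 / 25)] at this
  have := abs_sub_abs_le_abs_sub (c * cos θ) (-e)
  rw [abs_neg, sub_neg_eq_add] at this
  linarith

lemma rpow_sub_one_le_div {x M γ : ℝ} (hx : 0 < x) (hxM : x ≤ M) (hγ : 1 ≤ γ) :
    x ^ (γ - 1) ≤ M ^ γ / M := by
  rw [← rpow_sub_one (hx.trans_le hxM).ne']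
  exact rpow_le_rpow hx.le hxM (by linarith)

section ConeCondition

variable {d k β F P Q : ℝ}

lemma mul_le_of_mul_sqrt_le (hk : 0 ≤ k) (hd : 0 ≤ d) (hdk : d * √k ≤ 1 / 100)
    (hQ : Q ≤ 3 * k / 2) : d * Q ≤ 3 / 200 * √k := by
  have hkk := mul_self_sqrt hk
  nlinarith [mul_le_mul_of_nonneg_left hQ hd, sqrt_nonneg k]

lemma cone_condition_of_sqrt_le (hd : 100 ≤ d) (hk : 0 < k) (hdk : d * √k ≤ 1 / 100)
    (hF : 0 < F) (hβ0 : 0 ≤ β) (hβ : β ≤ 1 / 120000) (hQ0 : 0 ≤ Q) (hQ : Q ≤ 3 * k / 2)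
    (hP : |P| ≤ 11) (hsF : √k ≤ F) (hA : 2 ≤ |1 - d * P / F|) :
    |β * Q| + 100 * |-(d * Q / F)| + |β * P| / 100 ≤ |1 - d * P / F| := by
  have hsk : √k ≤ 1 / 10000 := by nlinarith [sqrt_nonneg k]
  have hkk := mul_self_sqrt hk.le
  have hB : d * Q / F ≤ 3 / 200 := by
    rw [div_le_iff₀ hF]
    nlinarith [mul_le_of_mul_sqrt_le hk.le (by linarith) hdk hQ]
  rw [abs_neg, abs_of_nonneg (div_nonneg (by positivity) hF.le), abs_mul, abs_mul,
    abs_of_nonneg hβ0, abs_of_nonneg hQ0]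
  nlinarith [sqrt_nonneg k]

lemma cone_condition_of_lt_sqrt (hd : 100 ≤ d) (hk : 0 < k) (hdk : d * √k ≤ 1 / 100)
    (hF : 0 < F) (hβ0 : 0 ≤ β) (hβ : β ≤ 1 / 120000) (hQ0 : 0 ≤ Q) (hQ : Q ≤ 3 * k / 2)
    (hP : |P| ≤ 11) (hsF : F < √k) (hP' : 3 / 2 ≤ |P|) :
    |β * Q| + 100 * |-(d * Q / F)| + |β * P| / 100 ≤ |1 - d * P / F| := by
  have hsk : √k ≤ 1 / 10000 := by nlinarith [sqrt_nonneg k]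
  have hdQ := mul_le_of_mul_sqrt_le hk.le (by linarith) hdk hQ
  have hA : 149 ≤ F * |1 - d * P / F| := by
    have hFA : F * |1 - d * P / F| = |F - d * P| := by
      rw [← abs_of_pos hF, ← abs_mul, abs_of_pos hF, mul_sub, mul_one, mul_div_cancel₀ _ hF.ne']
    have := abs_sub_abs_le_abs_sub (d * P) F
    rw [abs_sub_comm, abs_mul, abs_of_pos (by linarith : 0 < d), abs_of_pos hF] at this
    nlinarith
  refine le_of_mul_le_mul_left ?_ hF
  have hB : F * (d * Q / F) = d * Q := mul_div_cancel₀ _ hF.ne'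
  rw [abs_neg, abs_of_nonneg (div_nonneg (by positivity) hF.le), abs_mul, abs_mul,
    abs_of_nonneg hβ0, abs_of_nonneg hQ0, mul_add, mul_add, mul_left_comm F 100, hB]
  nlinarith [mul_nonneg hβ0 hQ0, mul_nonneg hβ0 (abs_nonneg P)]

end ConeCondition

lemma horseshoe_cone_condition {d γ c k b θ z e eθ ez F P Q : ℝ} (hd : 100 ≤ d) (hγ : 1 < γ)
    (hc : c ∈ Icc (2 : ℝ) 10) (hk : 0 < k) (hb : 0 < b) (hdk : d * √k ≤ 1 / 100)
    (hγb : γ * b * (12 : ℝ) ^ γ ≤ 1 / 10000) (he : |e| + |eθ| ≤ 1 / 50) (hez : |ez| ≤ k / 2)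
    (hz : z ∈ Icc (-1 : ℝ) 1) (hFe : F = 1 + c * sin θ + k * z + e) (hPe : P = c * cos θ + eθ)
    (hQe : Q = k + ez) (hF : 0 < F) (hcase : (√k ≤ F ∧ 2 ≤ |1 - d * P / F|) ∨ F < √k) :
    |b * γ * F ^ (γ - 1) * Q| + 100 * |-(d * Q / F)| + |b * γ * F ^ (γ - 1) * P| / 100
      ≤ |1 - d * P / F| := by
  have hsk : √k ≤ 1 / 10000 := by nlinarith [sqrt_nonneg k]
  have hk' : k ≤ 1 / 10000 := by
    rw [← mul_self_sqrt hk.le]; nlinarith [sqrt_nonneg k]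
  have he' : |e| ≤ 1 / 50 := by linarith [abs_nonneg eθ]
  have heθ : |eθ| ≤ 1 / 50 := by linarith [abs_nonneg e]
  have hβ : b * γ * F ^ (γ - 1) ≤ 1 / 120000 := by
    have hF12 : F ≤ 12 :=
      hFe ▸ horseshoe_le_twelve (by linarith [hc.1]) hc.2 hk.le (by linarith) hz.2 he'
    calc b * γ * F ^ (γ - 1) ≤ b * γ * ((12 : ℝ) ^ γ / 12) := by
          gcongr; exact rpow_sub_one_le_div hF hF12 hγ.le
      _ ≤ 1 / 120000 := by linarith
  have hβ0 : 0 ≤ b * γ * F ^ (γ - 1) := by have := hγ.le; positivity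
  have hQ := abs_le.mp hez
  have hP : |P| ≤ 11 := by
    have := abs_le.mp heθ
    have := abs_le.mp (abs_cos_le_one θ)
    rw [hPe]; exact abs_le.mpr ⟨by nlinarith [hc.1, hc.2], by nlinarith [hc.1, hc.2]⟩
  rcases hcase with ⟨hsF, hA⟩ | hsF
  · exact cone_condition_of_sqrt_le hd hk hdk hF hβ0 hβ (by linarith) (by linarith) hP hsF hA
  · have hfold : |1 + c * sin θ| ≤ 3 / 100 := by
      have := abs_le.mp he'
      exact abs_le.mpr ⟨by nlinarith [hz.2], by nlinarith [hz.1]⟩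
    exact cone_condition_of_lt_sqrt hd hk hdk hF hβ0 hβ (by linarith) (by linarith) hP hsF
      (hPe ▸ three_halves_le_abs_of_near_fold hc.1 hfold heθ)

/-- Positivity of det DT on V and vertical cone invariance for DT⁻¹ outside the
fold region, for the infinitely wrapped horseshoe map T. -/
theorem stmt8 (d γ c a k b : ℝ) (E : ℝ → ℝ → ℝ)
    (hd : 100 ≤ d) (hγ : 1 < γ) (hc : c ∈ Set.Icc (2:ℝ) 10)
    (hk : 0 < k) (hb : 0 < b)
    (hdk : d * Real.sqrt k ≤ 1/100)
    (hγb : γ * b * (12:ℝ) ^ γ ≤ 1/10000)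
    (hE : ContDiff ℝ 1 (Function.uncurry E))
    (hEbd : ∀ θ z : ℝ, |E θ z| + |deriv (fun t => E t z) θ| ≤ 1/50 ∧
      |deriv (fun t => E θ t) z| ≤ k/2)
    (F T₁ T₂ : ℝ → ℝ → ℝ)
    (hF : F = fun θ z => 1 + c * Real.sin θ + k * z + E θ z)
    (hT₁ : T₁ = fun θ z => θ + a - d * Real.log (F θ z))
    (hT₂ : T₂ = fun θ z => b * (F θ z) ^ γ)
    (A B C D : ℝ → ℝ → ℝ)
    (hA : A = fun θ z => deriv (fun t => T₁ t z) θ)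
    (hB : B = fun θ z => deriv (fun t => T₁ θ t) z)
    (hC : C = fun θ z => deriv (fun t => T₂ t z) θ)
    (hD : D = fun θ z => deriv (fun t => T₂ θ t) z) :
    (∀ θ z : ℝ, z ∈ Set.Icc (-1:ℝ) 1 → 0 < F θ z →
      A θ z * D θ z - B θ z * C θ z
          = γ * b * (F θ z) ^ (γ - 1) * deriv (fun t => F θ t) z ∧
      0 < A θ z * D θ z - B θ z * C θ z) ∧
    (∀ θ z : ℝ, z ∈ Set.Icc (-1:ℝ) 1 → 0 < F θ z →
      ((Real.sqrt k ≤ F θ z ∧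
          2 ≤ |1 - d * (deriv (fun t => F t z) θ) / F θ z|) ∨ F θ z < Real.sqrt k) →
      ∀ u v um vm : ℝ, ¬(u = 0 ∧ v = 0) → 100 * |u| ≤ |v| →
        A θ z * um + B θ z * vm = u → C θ z * um + D θ z * vm = v →
        100 * |um| ≤ |vm|) := by
  have hEd := hE.differentiable one_ne_zero
  have hFθ : ∀ θ z, HasDerivAt (fun t => F t z) (c * cos θ + deriv (fun t => E t z) θ) θ := by
    subst hF; exact hasDerivAt_horseshoe_left hEd
  have hFz : ∀ θ z, HasDerivAt (fun t => F θ t) (k + deriv (fun t => E θ t) z) z := by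
    subst hF; exact hasDerivAt_horseshoe_right hEd
  have hdet_pos : ∀ θ z, 0 < F θ z →
      0 < γ * b * F θ z ^ (γ - 1) * (k + deriv (fun t => E θ t) z) := fun θ z hF0 =>
    mul_pos (by have := hγ.le; positivity) (by linarith [(abs_le.mp (hEbd θ z).2).1])
  subst hA hB hC hD hT₁ hT₂
  beta_reduce
  refine ⟨fun θ z _ hF0 => ?_, fun θ z hz hF0 hcase u v um vm _ huv h₁ h₂ => ?_⟩
  · obtain ⟨hA, hB, hC, hD⟩ := jacobian_entries_of_hasDerivAt (hFθ θ z) (hFz θ z) hF0.ne' a d b γ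
    rw [hA, hB, hC, hD, jacobian_det_eq hF0.ne', (hFz θ z).deriv]
    exact ⟨rfl, hdet_pos θ z hF0⟩
  · obtain ⟨hA, hB, hC, hD⟩ := jacobian_entries_of_hasDerivAt (hFθ θ z) (hFz θ z) hF0.ne' a d b γ
    rw [hA, hB] at h₁
    rw [hC, hD] at h₂
    rw [(hFθ θ z).deriv] at hcase
    refine abs_mul_le_abs_of_cone ?_ ?_ huv h₁ h₂
    · rw [jacobian_det_eq hF0.ne']; exact hdet_pos θ z hF0
    · exact horseshoe_cone_condition hd hγ hc hk hb hdk hγb (hEbd θ z).1 (hEbd θ z).2 hz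
        (by rw [hF]) rfl rfl hF0 hcase
end

section
/- Set λ = (B − √(B² − 4C))/2, the square of the smallest singular value of M. Then the vector w = (‖Mv‖² − λ)·u − ⟨Mv, Mu⟩·v satisfies ‖Mw‖² = λ·‖w‖². In particular, if w ≠ 0 then the unit vector w/‖w‖ is a most contracted direction of M, i.e. ‖M(w/‖w‖)‖ ≤ ‖Mx‖ for every unit vector x. -/
/-!
With `a = ‖Mu‖²`, `c = ‖Mv‖²`, `b = ⟪Mv, Mu⟫`, orthonormality of `u, v` makes `C = ac - b²` the
Gram determinant of `Mu, Mv`, so `λ` is the smaller eigenvalue of the Gram matrix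
`G = [[a, b], [b, c]]` and the coordinates `(c - λ, -b)` of `w` span the kernel of `G - λ`; this
gives `‖Mw‖² = λ‖w‖²`. Since `B = tr (MᵀM)` and `C = det (MᵀM)` do not depend on the orthonormal
basis, completing a unit `x` to an orthonormal basis `x, y` yields
`‖Mx‖⁴ - B‖Mx‖² + C = -⟪Mx, My⟫² ≤ 0`, i.e. `‖Mx‖² ≥ λ`.
-/

open Module LinearMap
open scoped InnerProductSpace

theorem LinearMap.det_adjoint {𝕜 E : Type*} [RCLike 𝕜] [NormedAddCommGroup E]
    [InnerProductSpace 𝕜 E] [FiniteDimensional 𝕜 E] (T : E →ₗ[𝕜] E) :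
    LinearMap.det (adjoint T) = star (LinearMap.det T) := by
  let b := stdOrthonormalBasis 𝕜 E
  rw [← det_toMatrix b.toBasis, toMatrix_adjoint, Matrix.det_conjTranspose, det_toMatrix]

theorem Matrix.det_toEuclideanLin {𝕜 n : Type*} [RCLike 𝕜] [Fintype n] [DecidableEq n]
    (M : Matrix n n 𝕜) :
    LinearMap.det (Matrix.toEuclideanLin M) = M.det := by
  rw [toEuclideanLin_eq_toLin_orthonormal, det_toLin]

theorem smaller_root_le_of_sq_sub_mul_add_nonpos {B C q : ℝ} (h : q ^ 2 - B * q + C ≤ 0) :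
    (B - √(B ^ 2 - 4 * C)) / 2 ≤ q := by
  have hsq : (B - 2 * q) ^ 2 ≤ B ^ 2 - 4 * C := by linarith
  linarith [Real.le_sqrt_of_sq_le hsq]

section InnerProductSpace

variable {E : Type*} [NormedAddCommGroup E] [InnerProductSpace ℝ E]

theorem norm_map_sq_eq_mul_norm_sq_of_gram_root (T : E →ₗ[ℝ] E) {u v : E} (hu : ‖u‖ = 1)
    (hv : ‖v‖ = 1) (huv : ⟪u, v⟫_ℝ = 0) {lam : ℝ}
    (hlam : (‖T u‖ ^ 2 - lam) * (‖T v‖ ^ 2 - lam) = ⟪T v, T u⟫_ℝ ^ 2) :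
    ‖T ((‖T v‖ ^ 2 - lam) • u - ⟪T v, T u⟫_ℝ • v)‖ ^ 2 =
      lam * ‖(‖T v‖ ^ 2 - lam) • u - ⟪T v, T u⟫_ℝ • v‖ ^ 2 := by
  rw [map_sub, map_smul, map_smul, norm_sub_sq_real, norm_sub_sq_real, norm_smul, norm_smul,
    norm_smul, norm_smul, inner_smul_left, inner_smul_right, inner_smul_left, inner_smul_right,
    hu, hv, huv, real_inner_comm (T v) (T u)]
  simp only [Real.norm_eq_abs, mul_pow, sq_abs, conj_trivial]
  linear_combination (‖T v‖ ^ 2 - lam) * hlam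

variable {ι : Type*} [FiniteDimensional ℝ E] [Fintype ι]

theorem sum_norm_map_sq_eq_trace (T : E →ₗ[ℝ] E) (b : OrthonormalBasis ι ℝ E) :
    ∑ i, ‖T (b i)‖ ^ 2 = trace ℝ E (adjoint T ∘ₗ T) := by
  simp [trace_eq_sum_inner _ b, adjoint_inner_right]

theorem det_gram_map_eq_det_sq [DecidableEq ι] (T : E →ₗ[ℝ] E) (b : OrthonormalBasis ι ℝ E) :
    (Matrix.of fun i j => ⟪T (b i), T (b j)⟫_ℝ).det = LinearMap.det T ^ 2 := by
  have hgram : (Matrix.of fun i j => ⟪T (b i), T (b j)⟫_ℝ) =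
      toMatrix b.toBasis b.toBasis (adjoint T ∘ₗ T) := by
    ext i j
    simp [toMatrix_apply, OrthonormalBasis.repr_apply_apply, adjoint_inner_right]
  rw [hgram, det_toMatrix, det_comp, det_adjoint, star_trivial, sq]

end InnerProductSpace

section Plane

variable {E : Type*} [NormedAddCommGroup E] [InnerProductSpace ℝ E] [Fact (finrank ℝ E = 2)]

attribute [local instance] FiniteDimensional.of_fact_finrank_eq_two

theorem exists_orthonormalBasis_fin_two {u v : E} (hu : ‖u‖ = 1) (hv : ‖v‖ = 1)
    (huv : ⟪u, v⟫_ℝ = 0) : ∃ b : OrthonormalBasis (Fin 2) ℝ E, b 0 = u ∧ b 1 = v := by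
  have hon : Orthonormal ℝ ![u, v] := by
    simp [orthonormal_vecCons_iff, hu, hv, huv, orthonormal_subsingleton_iff]
  have hspan := hon.linearIndependent.span_eq_top_of_card_eq_finrank
    (by simp [(Fact.out : finrank ℝ E = 2)])
  exact ⟨OrthonormalBasis.mk hon hspan.ge, by simp, by simp⟩

theorem exists_orthonormal_pair_fin_two {x : E} (hx : ‖x‖ = 1) :
    ∃ y : E, ‖y‖ = 1 ∧ ⟪x, y⟫_ℝ = 0 := by
  have hon : Orthonormal ℝ (({0} : Set (Fin 2)).domRestrict fun _ => x) :=
    orthonormal_subsingleton_iff.mpr fun _ => hx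
  obtain ⟨b, hb⟩ :=
    hon.exists_orthonormalBasis_extension_of_card_eq (by simp [(Fact.out : finrank ℝ E = 2)])
  refine ⟨b 1, b.orthonormal.1 1, ?_⟩
  rw [← hb 0 rfl]
  exact b.orthonormal.2 (by decide)

theorem norm_map_sq_add_norm_map_sq_eq_trace (T : E →ₗ[ℝ] E) {u v : E} (hu : ‖u‖ = 1)
    (hv : ‖v‖ = 1) (huv : ⟪u, v⟫_ℝ = 0) :
    ‖T u‖ ^ 2 + ‖T v‖ ^ 2 = trace ℝ E (adjoint T ∘ₗ T) := by
  obtain ⟨b, rfl, rfl⟩ := exists_orthonormalBasis_fin_two hu hv huv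
  simpa [Fin.sum_univ_two] using sum_norm_map_sq_eq_trace T b

theorem norm_map_sq_mul_norm_map_sq_sub_inner_sq_eq_det_sq (T : E →ₗ[ℝ] E) {u v : E}
    (hu : ‖u‖ = 1) (hv : ‖v‖ = 1) (huv : ⟪u, v⟫_ℝ = 0) :
    ‖T u‖ ^ 2 * ‖T v‖ ^ 2 - ⟪T u, T v⟫_ℝ ^ 2 = LinearMap.det T ^ 2 := by
  obtain ⟨b, rfl, rfl⟩ := exists_orthonormalBasis_fin_two hu hv huv
  rw [← det_gram_map_eq_det_sq T b, Matrix.det_fin_two]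
  simp [real_inner_comm (T (b 0)), sq]

theorem norm_map_sq_sq_sub_trace_mul_add_det_sq_nonpos (T : E →ₗ[ℝ] E) {x : E}
    (hx : ‖x‖ = 1) :
    (‖T x‖ ^ 2) ^ 2 - trace ℝ E (adjoint T ∘ₗ T) * ‖T x‖ ^ 2 + LinearMap.det T ^ 2 ≤ 0 := by
  obtain ⟨y, hy, hxy⟩ := exists_orthonormal_pair_fin_two hx
  rw [← norm_map_sq_add_norm_map_sq_eq_trace T hx hy hxy,
    ← norm_map_sq_mul_norm_map_sq_sub_inner_sq_eq_det_sq T hx hy hxy]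
  linear_combination sq_nonneg ⟪T x, T y⟫_ℝ

end Plane

/-- The explicit formula for a most contracted direction of a 2×2 real matrix:
w = (‖Mv‖² − λ)·u − ⟨Mv, Mu⟩·v satisfies ‖Mw‖² = λ‖w‖², and if w ≠ 0 then
w/‖w‖ is a most contracted direction. -/
theorem stmt12 (M : Matrix (Fin 2) (Fin 2) ℝ)
    (u v : EuclideanSpace ℝ (Fin 2))
    (hu : ‖u‖ = 1) (hv : ‖v‖ = 1) (huv : inner ℝ u v = (0:ℝ))
    (B C lam : ℝ)
    (hB : B = ‖Matrix.toEuclideanLin M u‖ ^ 2 + ‖Matrix.toEuclideanLin M v‖ ^ 2)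
    (hC : C = M.det ^ 2)
    (hlam : lam = (B - Real.sqrt (B ^ 2 - 4 * C)) / 2)
    (w : EuclideanSpace ℝ (Fin 2))
    (hw : w = (‖Matrix.toEuclideanLin M v‖ ^ 2 - lam) • u -
        (inner ℝ (Matrix.toEuclideanLin M v) (Matrix.toEuclideanLin M u) : ℝ) • v) :
    ‖Matrix.toEuclideanLin M w‖ ^ 2 = lam * ‖w‖ ^ 2 ∧
    (w ≠ 0 → ∀ x : EuclideanSpace ℝ (Fin 2), ‖x‖ = 1 →
      ‖Matrix.toEuclideanLin M (‖w‖⁻¹ • w)‖ ≤ ‖Matrix.toEuclideanLin M x‖) := by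
  have : Fact (finrank ℝ (EuclideanSpace ℝ (Fin 2)) = 2) := ⟨finrank_euclideanSpace_fin⟩
  set T := Matrix.toEuclideanLin M
  have hCdet : C = LinearMap.det T ^ 2 := by rw [hC, Matrix.det_toEuclideanLin]
  have hCgram : C = ‖T u‖ ^ 2 * ‖T v‖ ^ 2 - ⟪T u, T v⟫_ℝ ^ 2 := by
    rw [hCdet, norm_map_sq_mul_norm_map_sq_sub_inner_sq_eq_det_sq T hu hv huv]
  have hdisc : 0 ≤ B ^ 2 - 4 * C := by
    rw [show B ^ 2 - 4 * C = (‖T u‖ ^ 2 - ‖T v‖ ^ 2) ^ 2 + 4 * ⟪T u, T v⟫_ℝ ^ 2 by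
      rw [hB, hCgram]; ring]
    positivity
  have hquad : lam ^ 2 - B * lam + C = 0 := by
    rw [hlam]; linear_combination Real.sq_sqrt hdisc / 4
  have hgram : (‖T u‖ ^ 2 - lam) * (‖T v‖ ^ 2 - lam) = ⟪T v, T u⟫_ℝ ^ 2 := by
    rw [real_inner_comm]; linear_combination hquad + lam * hB - hCgram
  have hMw : ‖T w‖ ^ 2 = lam * ‖w‖ ^ 2 :=
    hw ▸ norm_map_sq_eq_mul_norm_sq_of_gram_root T hu hv huv hgram
  refine ⟨hMw, fun hw0 x hx => ?_⟩
  have hmin : lam ≤ ‖T x‖ ^ 2 := by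
    rw [hlam, hB, norm_map_sq_add_norm_map_sq_eq_trace T hu hv huv, hCdet]
    exact smaller_root_le_of_sq_sub_mul_add_nonpos
      (norm_map_sq_sq_sub_trace_mul_add_det_sq_nonpos T hx)
  have hunit : ‖T (‖w‖⁻¹ • w)‖ ^ 2 = lam := by
    rw [map_smul, norm_smul, mul_pow, hMw, norm_inv, norm_norm]
    field_simp [norm_ne_zero_iff.mpr hw0]
  exact (pow_le_pow_iff_left₀ (norm_nonneg _) (norm_nonneg _) two_ne_zero).1 (hunit ▸ hmin)
end

section
/- There is a constant C depending only on K (one may take C = 32K⁵) such that, provided C·b ≤ 1/2, the following hold. For each 1 ≤ i ≤ n the minimum of ‖M^{(i)}x‖ over unit vectors x is at most (K·b)^i; the most contracted unit direction e_i of M^{(i)} exists and is unique up to sign; and the signs of the e_i can be chosen so that ‖e_{i+1} − e_i‖ ≤ (C·b)^i for all 1 ≤ i < n, and ‖M^{(i)}·e_n‖ ≤ (C·b)^i for all 1 ≤ i ≤ n. -/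
/-!
A most contracted direction `e` of a linear map `T` is a critical point of `x ↦ ‖T x‖²` on the
unit sphere, so `T e ⟂ T f` for the unit vector `f ⟂ e`. In the plane this makes `f` the most
expanded direction and gives `|det T| = ‖T e‖ ‖T f‖`; hence `‖P_i e_i‖ ≤ |det P_i| ≤ (K b)^i` as
soon as `‖P_i‖ ≥ 1`. Since `‖P_{i+1} e_i‖ ≤ K (K b)^i` is tiny while `‖P_{i+1}‖ ≥ 1`, the component
of `e_{i+1}` orthogonal to `e_i` is at most `4 K (K b)^i`; summing this geometric series bounds
`e_n - e_i`, and then `‖P_i e_n‖ ≤ ‖P_i e_i‖ + K^i ‖e_n - e_i‖`.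
-/

open scoped RealInnerProductSpace

section MostContracted

variable {E F : Type*} [NormedAddCommGroup E] [NormedSpace ℝ E]
  [NormedAddCommGroup F] [NormedSpace ℝ F]

def IsMostContracted (T : E →ₗ[ℝ] F) (e : E) : Prop :=
  ‖e‖ = 1 ∧ ∀ x : E, ‖x‖ = 1 → ‖T e‖ ≤ ‖T x‖

theorem exists_isMostContracted [FiniteDimensional ℝ E] [Nontrivial E] (T : E →ₗ[ℝ] F) :
    ∃ e, IsMostContracted T e := by
  obtain ⟨e, he, hmin⟩ := (isCompact_sphere (0 : E) 1).exists_isMinOn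
    (NormedSpace.sphere_nonempty.2 zero_le_one)
    T.continuous_of_finiteDimensional.norm.continuousOn
  exact ⟨e, by simpa using he, fun x hx => hmin (by simpa using hx)⟩

namespace IsMostContracted

variable {T : E →ₗ[ℝ] F} {e : E}

theorem neg (h : IsMostContracted T e) : IsMostContracted T (-e) := by
  simpa [IsMostContracted] using h

theorem norm_map_mul_le (h : IsMostContracted T e) (x : E) : ‖T e‖ * ‖x‖ ≤ ‖T x‖ := by
  rcases eq_or_ne x 0 with rfl | hx
  · simp
  have hx' : ‖x‖ ≠ 0 := norm_ne_zero_iff.2 hx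
  have := h.2 (‖x‖⁻¹ • x) (by rw [norm_smul, norm_inv, norm_norm, inv_mul_cancel₀ hx'])
  rw [map_smul, norm_smul, norm_inv, norm_norm] at this
  rwa [← le_div_iff₀ (norm_pos_iff.2 hx), div_eq_inv_mul]

end IsMostContracted

end MostContracted

namespace IsMostContracted

variable {E F : Type*} [NormedAddCommGroup E] [InnerProductSpace ℝ E]
  [NormedAddCommGroup F] [InnerProductSpace ℝ F] {T : E →ₗ[ℝ] F} {e : E}

theorem inner_map_eq_zero (h : IsMostContracted T e) {y : E} (hy : ⟪e, y⟫ = 0) :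
    ⟪T e, T y⟫ = 0 := by
  -- `t ↦ ‖T (e + t y)‖² - ‖T e‖² ‖e + t y‖²` is a nonnegative quadratic vanishing at `0`.
  have hquad (t : ℝ) :
      0 ≤ (‖T y‖ ^ 2 - ‖T e‖ ^ 2 * ‖y‖ ^ 2) * (t * t) + 2 * ⟪T e, T y⟫ * t + 0 := by
    have hsq := pow_le_pow_left₀ (by positivity) (h.norm_map_mul_le (e + t • y)) 2
    rw [map_add, map_smul, mul_pow, norm_add_sq_real, norm_add_sq_real, inner_smul_right,
      inner_smul_right, hy, norm_smul, norm_smul, h.1] at hsq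
    simp only [Real.norm_eq_abs, mul_pow, sq_abs] at hsq
    nlinarith
  have := discrim_le_zero hquad
  rw [discrim] at this
  nlinarith [sq_nonneg ⟪T e, T y⟫]

end IsMostContracted

local notation "V2" => EuclideanSpace ℝ (Fin 2)

namespace EuclideanSpace

def rot90 (x : V2) : V2 := !₂[-x 1, x 0]

@[simp] theorem rot90_apply_zero (x : V2) : rot90 x 0 = -x 1 := rfl
@[simp] theorem rot90_apply_one (x : V2) : rot90 x 1 = x 0 := rfl

theorem inner_fin_two (x y : V2) : ⟪x, y⟫ = x 0 * y 0 + x 1 * y 1 := by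
  simp [PiLp.inner_apply, Fin.sum_univ_two, mul_comm]

theorem norm_sq_fin_two (x : V2) : ‖x‖ ^ 2 = x 0 ^ 2 + x 1 ^ 2 := by
  rw [real_norm_sq_eq, Fin.sum_univ_two]

theorem sq_add_sq_of_norm_eq_one {e : V2} (he : ‖e‖ = 1) : e 0 ^ 2 + e 1 ^ 2 = 1 := by
  rw [← norm_sq_fin_two, he, one_pow]

theorem norm_rot90 (x : V2) : ‖rot90 x‖ = ‖x‖ := by
  rw [← sq_eq_sq₀ (norm_nonneg _) (norm_nonneg _), norm_sq_fin_two, norm_sq_fin_two]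
  simp only [rot90_apply_zero, rot90_apply_one]
  ring

theorem inner_rot90_self (x : V2) : ⟪x, rot90 x⟫ = 0 := by
  rw [inner_fin_two, rot90_apply_zero, rot90_apply_one]
  ring

theorem eq_inner_smul_add_inner_rot90_smul {e : V2} (he : ‖e‖ = 1) (x : V2) :
    x = ⟪e, x⟫ • e + ⟪rot90 e, x⟫ • rot90 e := by
  have hu := sq_add_sq_of_norm_eq_one he
  ext j
  fin_cases j <;> simp [inner_fin_two] <;> linear_combination (-x _) * hu

theorem inner_sq_add_inner_rot90_sq {e : V2} (he : ‖e‖ = 1) (x : V2) :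
    ⟪e, x⟫ ^ 2 + ⟪rot90 e, x⟫ ^ 2 = ‖x‖ ^ 2 := by
  have hu := sq_add_sq_of_norm_eq_one he
  rw [inner_fin_two, inner_fin_two, norm_sq_fin_two, rot90_apply_zero, rot90_apply_one]
  linear_combination (x 0 ^ 2 + x 1 ^ 2) * hu

theorem toEuclideanLin_apply_fin_two (A : Matrix (Fin 2) (Fin 2) ℝ) (x : V2) (j : Fin 2) :
    A.toEuclideanLin x j = A j 0 * x 0 + A j 1 * x 1 := by
  simp only [Matrix.toLpLin_apply, Matrix.mulVec, dotProduct, Fin.sum_univ_two]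

/-- Lagrange's identity `(u × v)² + ⟪u, v⟫² = ‖u‖² ‖v‖²` for `u = A e`, `v = A (rot90 e)`,
whose cross product is `det A`. -/
theorem sq_det_eq {e : V2} (he : ‖e‖ = 1) (A : Matrix (Fin 2) (Fin 2) ℝ) :
    A.det ^ 2 = ‖A.toEuclideanLin e‖ ^ 2 * ‖A.toEuclideanLin (rot90 e)‖ ^ 2
      - ⟪A.toEuclideanLin e, A.toEuclideanLin (rot90 e)⟫ ^ 2 := by
  have hu := sq_add_sq_of_norm_eq_one he
  simp only [norm_sq_fin_two, inner_fin_two, toEuclideanLin_apply_fin_two, rot90_apply_zero,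
    rot90_apply_one, Matrix.det_fin_two]
  linear_combination (-(A 0 0 * A 1 1 - A 0 1 * A 1 0) ^ 2 * (e 0 ^ 2 + e 1 ^ 2 + 1)) * hu

theorem norm_sub_le_of_inner_nonneg {e e' : V2} (he : ‖e‖ = 1) (he' : ‖e'‖ = 1)
    (hpos : 0 ≤ ⟪e, e'⟫) : ‖e' - e‖ ≤ 2 * |⟪rot90 e, e'⟫| := by
  have hsum := inner_sq_add_inner_rot90_sq he e'
  rw [he'] at hsum
  have hdist : ‖e' - e‖ ^ 2 = 2 - 2 * ⟪e, e'⟫ := by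
    rw [norm_sub_sq_real, he, he', real_inner_comm]; ring
  have hle : ⟪e, e'⟫ ≤ 1 := by nlinarith
  refine (abs_le_of_sq_le_sq' ?_ (by positivity)).2
  nlinarith [sq_abs ⟪rot90 e, e'⟫]

end EuclideanSpace

open EuclideanSpace

namespace IsMostContracted

variable {F : Type*} [NormedAddCommGroup F] [InnerProductSpace ℝ F] {T : V2 →ₗ[ℝ] F}
  {e e' : V2}

theorem norm_map_sq_eq (h : IsMostContracted T e) (x : V2) :
    ‖T x‖ ^ 2 = ⟪e, x⟫ ^ 2 * ‖T e‖ ^ 2 + ⟪rot90 e, x⟫ ^ 2 * ‖T (rot90 e)‖ ^ 2 := by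
  have horth := h.inner_map_eq_zero (inner_rot90_self e)
  conv_lhs => rw [eq_inner_smul_add_inner_rot90_smul h.1 x]
  rw [map_add, map_smul, map_smul, norm_add_sq_real, inner_smul_left, inner_smul_right, horth,
    norm_smul, norm_smul, Real.norm_eq_abs, Real.norm_eq_abs, mul_pow, mul_pow, sq_abs, sq_abs]
  simp

theorem one_le_norm_map_rot90 (h : IsMostContracted T e)
    (hexp : ∃ x : V2, ‖x‖ = 1 ∧ 1 ≤ ‖T x‖) : 1 ≤ ‖T (rot90 e)‖ := by
  obtain ⟨x, hx, hTx⟩ := hexp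
  have hsq := h.norm_map_sq_eq x
  have hsum := inner_sq_add_inner_rot90_sq h.1 x
  rw [hx] at hsum
  have hmin : ‖T e‖ ^ 2 ≤ ‖T (rot90 e)‖ ^ 2 :=
    pow_le_pow_left₀ (norm_nonneg _) (h.2 (rot90 e) (by rw [norm_rot90, h.1])) 2
  nlinarith [norm_nonneg (T (rot90 e)), sq_nonneg ⟪e, x⟫, sq_nonneg ⟪rot90 e, x⟫]

theorem eq_or_eq_neg (h : IsMostContracted T e) (hgap : ‖T e‖ < ‖T (rot90 e)‖)
    (h' : IsMostContracted T e') : e' = e ∨ e' = -e := by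
  have hsq := h.norm_map_sq_eq e'
  have hsum := inner_sq_add_inner_rot90_sq h.1 e'
  rw [h'.1] at hsum
  rw [le_antisymm (h'.2 e h.1) (h.2 e' h'.1)] at hsq
  have hgap2 : ‖T e‖ ^ 2 < ‖T (rot90 e)‖ ^ 2 := pow_lt_pow_left₀ hgap (norm_nonneg _) two_ne_zero
  have hrot : ⟪rot90 e, e'⟫ = 0 := by
    have : ⟪rot90 e, e'⟫ ^ 2 * (‖T (rot90 e)‖ ^ 2 - ‖T e‖ ^ 2) = 0 := by
      linear_combination -hsq - ‖T e‖ ^ 2 * hsum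
    exact pow_eq_zero_iff two_ne_zero |>.1 <|
      (mul_eq_zero.1 this).resolve_right (sub_pos.2 hgap2).ne'
  have hdecomp := eq_inner_smul_add_inner_rot90_smul h.1 e'
  rw [hrot, zero_smul, add_zero] at hdecomp
  rw [hrot] at hsum
  rcases sq_eq_one_iff.1 (by linear_combination hsum : ⟪e, e'⟫ ^ 2 = 1) with h1 | h1
  · left; rw [hdecomp, h1, one_smul]
  · right; rw [hdecomp, h1, neg_one_smul]

theorem eq_or_eq_neg_of_norm_map_lt_one (h : IsMostContracted T e)
    (hexp : ∃ x : V2, ‖x‖ = 1 ∧ 1 ≤ ‖T x‖) (hlt : ‖T e‖ < 1) (h' : IsMostContracted T e') :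
    e' = e ∨ e' = -e :=
  h.eq_or_eq_neg (hlt.trans_le (h.one_le_norm_map_rot90 hexp)) h'

theorem abs_det_eq {A : Matrix (Fin 2) (Fin 2) ℝ} (h : IsMostContracted A.toEuclideanLin e) :
    |A.det| = ‖A.toEuclideanLin e‖ * ‖A.toEuclideanLin (rot90 e)‖ := by
  rw [← sq_eq_sq₀ (abs_nonneg _) (by positivity), sq_abs, sq_det_eq h.1,
    h.inner_map_eq_zero (inner_rot90_self e)]
  ring

theorem norm_map_le_abs_det {A : Matrix (Fin 2) (Fin 2) ℝ}
    (h : IsMostContracted A.toEuclideanLin e)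
    (hexp : ∃ x : V2, ‖x‖ = 1 ∧ 1 ≤ ‖A.toEuclideanLin x‖) :
    ‖A.toEuclideanLin e‖ ≤ |A.det| := by
  rw [h.abs_det_eq]
  exact le_mul_of_one_le_right (norm_nonneg _) (h.one_le_norm_map_rot90 hexp)

end IsMostContracted

namespace IsMostContracted

variable {F : Type*} [NormedAddCommGroup F] [NormedSpace ℝ F] {T : V2 →ₗ[ℝ] F} {e e' : V2}

theorem abs_inner_rot90_le (h' : IsMostContracted T e') (he : ‖e‖ = 1)
    (hexp : ∃ x : V2, ‖x‖ = 1 ∧ 1 ≤ ‖T x‖) (hsmall : ‖T e‖ ≤ 1 / 2) :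
    |⟪rot90 e, e'⟫| ≤ 4 * ‖T e‖ := by
  have hcoef (x : V2) (hx : ‖x‖ = 1) : |⟪e, x⟫| ≤ 1 ∧ |⟪rot90 e, x⟫| ≤ 1 := by
    have h1 := abs_real_inner_le_norm e x
    have h2 := abs_real_inner_le_norm (rot90 e) x
    rw [he, hx] at h1
    rw [norm_rot90, he, hx] at h2
    constructor <;> linarith
  have hrot : 1 / 2 ≤ ‖T (rot90 e)‖ := by
    obtain ⟨x, hx, hTx⟩ := hexp
    have hdecomp : ‖T x‖ ≤ |⟪e, x⟫| * ‖T e‖ + |⟪rot90 e, x⟫| * ‖T (rot90 e)‖ := by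
      conv_lhs => rw [eq_inner_smul_add_inner_rot90_smul he x]
      rw [map_add, map_smul, map_smul]
      refine (norm_add_le _ _).trans_eq ?_
      rw [norm_smul, norm_smul, Real.norm_eq_abs, Real.norm_eq_abs]
    obtain ⟨h1, h2⟩ := hcoef x hx
    nlinarith [norm_nonneg (T e), norm_nonneg (T (rot90 e))]
  have hβ : |⟪rot90 e, e'⟫| * ‖T (rot90 e)‖ ≤ 2 * ‖T e‖ := by
    have hsplit : ⟪rot90 e, e'⟫ • T (rot90 e) = T e' - ⟪e, e'⟫ • T e := by
      conv_rhs => enter [1]; rw [eq_inner_smul_add_inner_rot90_smul he e']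
      rw [map_add, map_smul, map_smul]; abel
    have := congrArg norm hsplit
    rw [norm_smul, Real.norm_eq_abs] at this
    rw [this]
    refine (norm_sub_le _ _).trans ?_
    rw [norm_smul, Real.norm_eq_abs]
    nlinarith [(hcoef e' h'.1).1, norm_nonneg (T e), h'.2 e he]
  nlinarith [abs_nonneg ⟪rot90 e, e'⟫]

theorem norm_sub_le_of_comp {G : Type*} [NormedAddCommGroup G] [NormedSpace ℝ G]
    {S : F →ₗ[ℝ] G} {K δ : ℝ} (hK : 0 ≤ K) (hS : ∀ y, ‖S y‖ ≤ K * ‖y‖)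
    (h' : IsMostContracted (S ∘ₗ T) e') (he : ‖e‖ = 1)
    (hexp : ∃ x : V2, ‖x‖ = 1 ∧ 1 ≤ ‖(S ∘ₗ T) x‖) (hpos : 0 ≤ ⟪e, e'⟫)
    (hTe : ‖T e‖ ≤ δ) (hδ : K * δ ≤ 1 / 2) :
    ‖e' - e‖ ≤ 8 * K * δ := by
  have hST : ‖(S ∘ₗ T) e‖ ≤ K * δ := (hS (T e)).trans (mul_le_mul_of_nonneg_left hTe hK)
  calc ‖e' - e‖ ≤ 2 * |⟪rot90 e, e'⟫| := norm_sub_le_of_inner_nonneg he h'.1 hpos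
    _ ≤ 2 * (4 * ‖(S ∘ₗ T) e‖) := by
      gcongr; exact h'.abs_inner_rot90_le he hexp (hST.trans hδ)
    _ ≤ 8 * K * δ := by linarith

end IsMostContracted

theorem exists_seq_inner_succ_nonneg {E : Type*} [NormedAddCommGroup E] [InnerProductSpace ℝ E]
    (S : ℕ → E → Prop) (hS : ∀ i, ∃ v, S i v) (hneg : ∀ i v, S i v → S i (-v)) :
    ∃ e : ℕ → E, (∀ i, S i (e i)) ∧ ∀ i, 0 ≤ ⟪e i, e (i + 1)⟫ := by
  choose v hv using hS
  let e : ℕ → E := fun i => Nat.rec (v 0)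
    (fun i prev => if 0 ≤ ⟪prev, v (i + 1)⟫ then v (i + 1) else -v (i + 1)) i
  refine ⟨e, fun i => ?_, fun i => ?_⟩
  · cases i with
    | zero => exact hv 0
    | succ i =>
      change S (i + 1) (if 0 ≤ ⟪e i, v (i + 1)⟫ then v (i + 1) else -v (i + 1))
      split_ifs
      exacts [hv _, hneg _ _ (hv _)]
  · change 0 ≤ ⟪e i, if 0 ≤ ⟪e i, v (i + 1)⟫ then v (i + 1) else -v (i + 1)⟫
    split_ifs with h
    · exact h
    · rw [inner_neg_right]; linarith

theorem norm_sub_le_of_norm_succ_sub_le_geometric {E : Type*} [SeminormedAddCommGroup E]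
    {x : ℕ → E} {c r : ℝ} {m n : ℕ} (hc : 0 ≤ c) (hr₀ : 0 ≤ r) (hr₁ : r < 1) (hmn : m ≤ n)
    (h : ∀ k, m ≤ k → k < n → ‖x (k + 1) - x k‖ ≤ c * r ^ k) :
    ‖x n - x m‖ ≤ c * r ^ m / (1 - r) := by
  rw [← dist_eq_norm, dist_comm]
  calc dist (x m) (x n) ≤ ∑ k ∈ Finset.Ico m n, c * r ^ k :=
        dist_le_Ico_sum_of_dist_le hmn fun hm hn => by
          rw [dist_comm, dist_eq_norm]; exact h _ hm hn
    _ = c * ∑ k ∈ Finset.Ico m n, r ^ k := (Finset.mul_sum _ _ _).symm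
    _ ≤ c * (r ^ m / (1 - r)) := by gcongr; exact geom_sum_Ico_le_of_lt_one hr₀ hr₁
    _ = c * r ^ m / (1 - r) := by ring

section CumulativeProduct

variable {n : ℕ} {M P : ℕ → Matrix (Fin 2) (Fin 2) ℝ}

theorem norm_toEuclideanLin_cumulative_le {K : ℝ} (hK : 0 ≤ K) (hP1 : P 1 = M 1)
    (hPs : ∀ i, P (i + 1) = M (i + 1) * P i)
    (hM : ∀ i, 1 ≤ i → i ≤ n → ∀ x : V2, ‖(M i).toEuclideanLin x‖ ≤ K * ‖x‖) :
    ∀ i, 1 ≤ i → i ≤ n → ∀ x : V2, ‖(P i).toEuclideanLin x‖ ≤ K ^ i * ‖x‖ := by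
  intro i hi
  induction i, hi using Nat.le_induction with
  | base => intro h1 x; rw [hP1, pow_one]; exact hM 1 le_rfl h1 x
  | succ i hi ih =>
    intro hin x
    rw [hPs, Matrix.toLpLin_mul_same, LinearMap.comp_apply, pow_succ', mul_assoc]
    exact (hM (i + 1) (by omega) hin _).trans
      (mul_le_mul_of_nonneg_left (ih (by omega) x) hK)

theorem abs_det_cumulative_le {c : ℝ} (hP1 : P 1 = M 1)
    (hPs : ∀ i, P (i + 1) = M (i + 1) * P i) (hM : ∀ i, 1 ≤ i → i ≤ n → |(M i).det| ≤ c) :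
    ∀ i, 1 ≤ i → i ≤ n → |(P i).det| ≤ c ^ i := by
  intro i hi
  induction i, hi using Nat.le_induction with
  | base => intro h1; rw [hP1, pow_one]; exact hM 1 le_rfl h1
  | succ i hi ih =>
    intro hin
    rw [hPs, Matrix.det_mul, abs_mul, pow_succ']
    exact mul_le_mul (hM (i + 1) (by omega) hin) (ih (by omega)) (abs_nonneg _)
      ((abs_nonneg _).trans (hM 1 le_rfl (by omega)))

end CumulativeProduct

theorem mul_pow_mul_pow_le_pow {K b c : ℝ} {i m : ℕ} (hK : 1 ≤ K) (hb : 0 ≤ b) (hc : c ≤ 32)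
    (hi : 1 ≤ i) (hm : m ≤ 5 * i) :
    c * K ^ m * b ^ i ≤ (32 * K ^ 5 * b) ^ i := by
  rw [mul_pow, mul_pow, ← pow_mul]
  gcongr
  exact hc.trans (le_self_pow₀ (by norm_num) (by omega))

theorem pow_add_pow_mul_mul_pow_le {K b : ℝ} {i : ℕ} (hK : 1 ≤ K) (hb : 0 ≤ b) (hi : 1 ≤ i) :
    (K * b) ^ i + K ^ i * (16 * K * (K * b) ^ i) ≤ (32 * K ^ 5 * b) ^ i :=
  calc (K * b) ^ i + K ^ i * (16 * K * (K * b) ^ i)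
      = K ^ i * b ^ i + 16 * K ^ (2 * i + 1) * b ^ i := by ring
    _ ≤ K ^ (2 * i + 1) * b ^ i + 16 * K ^ (2 * i + 1) * b ^ i := by gcongr; omega
    _ = 17 * K ^ (2 * i + 1) * b ^ i := by ring
    _ ≤ (32 * K ^ 5 * b) ^ i := mul_pow_mul_pow_le_pow hK hb (by norm_num) hi (by omega)

theorem stmt15_general (K b : ℝ) (hK : 2 ≤ K) (hb : 0 < b) (n : ℕ)
    (M : ℕ → Matrix (Fin 2) (Fin 2) ℝ)
    (hnorm : ∀ i, 1 ≤ i → i ≤ n → ∀ x : EuclideanSpace ℝ (Fin 2),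
      ‖Matrix.toEuclideanLin (M i) x‖ ≤ K * ‖x‖)
    (hdet : ∀ i, 1 ≤ i → i ≤ n → |(M i).det| ≤ K * b)
    (P : ℕ → Matrix (Fin 2) (Fin 2) ℝ)
    (hP1 : P 1 = M 1) (hPs : ∀ i, P (i + 1) = M (i + 1) * P i)
    (hexp : ∀ i, 1 ≤ i → i ≤ n → ∃ x : EuclideanSpace ℝ (Fin 2),
      ‖x‖ = 1 ∧ 1 ≤ ‖Matrix.toEuclideanLin (P i) x‖) :
    ∃ C : ℝ, C = 32 * K ^ 5 ∧
      (C * b ≤ 1/2 → ∃ e : ℕ → EuclideanSpace ℝ (Fin 2),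
        (∀ i, 1 ≤ i → i ≤ n →
          ‖e i‖ = 1 ∧
          (∀ x : EuclideanSpace ℝ (Fin 2), ‖x‖ = 1 →
            ‖Matrix.toEuclideanLin (P i) (e i)‖ ≤ ‖Matrix.toEuclideanLin (P i) x‖) ∧
          ‖Matrix.toEuclideanLin (P i) (e i)‖ ≤ (K * b) ^ i ∧
          (∀ e' : EuclideanSpace ℝ (Fin 2), ‖e'‖ = 1 →
            (∀ x : EuclideanSpace ℝ (Fin 2), ‖x‖ = 1 →
              ‖Matrix.toEuclideanLin (P i) e'‖ ≤ ‖Matrix.toEuclideanLin (P i) x‖) →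
            e' = e i ∨ e' = -(e i))) ∧
        (∀ i, 1 ≤ i → i < n → ‖e (i + 1) - e i‖ ≤ (C * b) ^ i) ∧
        (∀ i, 1 ≤ i → i ≤ n → ‖Matrix.toEuclideanLin (P i) (e n)‖ ≤ (C * b) ^ i)) := by
  refine ⟨_, rfl, fun hCb => ?_⟩
  have hK1 : 1 ≤ K := by linarith
  have hKKb : K * (K * b) ≤ 1 / 2 := by
    nlinarith [pow_le_pow_right₀ hK1 (show 2 ≤ 5 by norm_num)]
  have hKb : K * b ≤ 1 / 2 := by nlinarith
  obtain ⟨e, he, hpos⟩ := exists_seq_inner_succ_nonneg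
    (fun i => IsMostContracted (P i).toEuclideanLin) (fun i => exists_isMostContracted _)
    (fun _ _ h => h.neg)
  have hsmall (i : ℕ) (h1 : 1 ≤ i) (h2 : i ≤ n) : ‖(P i).toEuclideanLin (e i)‖ ≤ (K * b) ^ i :=
    ((he i).norm_map_le_abs_det (hexp i h1 h2)).trans (abs_det_cumulative_le hP1 hPs hdet i h1 h2)
  have hstep (i : ℕ) (h1 : 1 ≤ i) (h2 : i < n) : ‖e (i + 1) - e i‖ ≤ 8 * K * (K * b) ^ i := by
    have he' := he (i + 1)
    have hexp' := hexp (i + 1) (by omega) h2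
    rw [hPs, Matrix.toLpLin_mul_same] at he' hexp'
    refine he'.norm_sub_le_of_comp (by linarith) (hnorm _ (by omega) h2) (he i).1 hexp' (hpos i)
      (hsmall i h1 h2.le) (le_trans ?_ hKKb)
    gcongr
    exact pow_le_of_le_one (by positivity) (by linarith) (by omega)
  have htail (i : ℕ) (h1 : 1 ≤ i) (h2 : i ≤ n) : ‖e n - e i‖ ≤ 16 * K * (K * b) ^ i := by
    refine (norm_sub_le_of_norm_succ_sub_le_geometric (by positivity) (by positivity)
      (by linarith) h2 fun k hk hkn => hstep k (by omega) hkn).trans ?_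
    rw [div_le_iff₀ (by linarith)]
    nlinarith [pow_pos (by positivity : 0 < K * b) i]
  refine ⟨e, fun i h1 h2 => ⟨(he i).1, (he i).2, hsmall i h1 h2, fun e' he' hmin' =>
    (he i).eq_or_eq_neg_of_norm_map_lt_one (hexp i h1 h2) ((hsmall i h1 h2).trans_lt
      (pow_lt_one₀ (by positivity) (by linarith) (by omega))) ⟨he', hmin'⟩⟩,
    fun i h1 h2 => ?_, fun i h1 h2 => ?_⟩
  · calc ‖e (i + 1) - e i‖ ≤ 8 * K * (K * b) ^ i := hstep i h1 h2
      _ = 8 * K ^ (i + 1) * b ^ i := by ring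
      _ ≤ _ := mul_pow_mul_pow_le_pow hK1 hb.le (by norm_num) h1 (by omega)
  · calc ‖(P i).toEuclideanLin (e n)‖
        ≤ ‖(P i).toEuclideanLin (e i)‖ + ‖(P i).toEuclideanLin (e n - e i)‖ := by
          rw [map_sub]; exact norm_le_norm_add_norm_sub' _ _
      _ ≤ (K * b) ^ i + K ^ i * (16 * K * (K * b) ^ i) := by
          gcongr
          · exact hsmall i h1 h2
          · exact (norm_toEuclideanLin_cumulative_le (by linarith) hP1 hPs hnorm i h1 h2 _).trans
              (by gcongr; exact htail i h1 h2)
      _ ≤ _ := pow_add_pow_mul_mul_pow_le hK1 hb.le h1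

/-- Stability of most contracted directions for products of expanding matrices
with small determinant (Lemma on e_i along orbits in the hyperbolic region). -/
theorem stmt15 (K b : ℝ) (hK : 2 ≤ K) (hb : 0 < b) (n : ℕ) (hn : 1 ≤ n)
    (M : ℕ → Matrix (Fin 2) (Fin 2) ℝ)
    (hnorm : ∀ i, 1 ≤ i → i ≤ n → ∀ x : EuclideanSpace ℝ (Fin 2),
      ‖Matrix.toEuclideanLin (M i) x‖ ≤ K * ‖x‖)
    (hdet : ∀ i, 1 ≤ i → i ≤ n → |(M i).det| ≤ K * b)
    (P : ℕ → Matrix (Fin 2) (Fin 2) ℝ)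
    (hP1 : P 1 = M 1) (hPs : ∀ i, P (i + 1) = M (i + 1) * P i)
    (hexp : ∀ i, 1 ≤ i → i ≤ n → ∃ x : EuclideanSpace ℝ (Fin 2),
      ‖x‖ = 1 ∧ 1 ≤ ‖Matrix.toEuclideanLin (P i) x‖) :
    ∃ C : ℝ, C = 32 * K ^ 5 ∧
      (C * b ≤ 1/2 → ∃ e : ℕ → EuclideanSpace ℝ (Fin 2),
        (∀ i, 1 ≤ i → i ≤ n →
          ‖e i‖ = 1 ∧
          (∀ x : EuclideanSpace ℝ (Fin 2), ‖x‖ = 1 →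
            ‖Matrix.toEuclideanLin (P i) (e i)‖ ≤ ‖Matrix.toEuclideanLin (P i) x‖) ∧
          ‖Matrix.toEuclideanLin (P i) (e i)‖ ≤ (K * b) ^ i ∧
          (∀ e' : EuclideanSpace ℝ (Fin 2), ‖e'‖ = 1 →
            (∀ x : EuclideanSpace ℝ (Fin 2), ‖x‖ = 1 →
              ‖Matrix.toEuclideanLin (P i) e'‖ ≤ ‖Matrix.toEuclideanLin (P i) x‖) →
            e' = e i ∨ e' = -(e i))) ∧
        (∀ i, 1 ≤ i → i < n → ‖e (i + 1) - e i‖ ≤ (C * b) ^ i) ∧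
        (∀ i, 1 ≤ i → i ≤ n → ‖Matrix.toEuclideanLin (P i) (e n)‖ ≤ (C * b) ^ i)) :=
  stmt15_general K b hK hb n M hnorm hdet P hP1 hPs hexp
end

section
/- Let R : ℝ → ℝ be continuous, and suppose there exist constants C, ξ > 0 such that |R(s)| ≤ C·e^{−ξ|s|} for all s ∈ ℝ. If R is not identically zero, then the set of real numbers ω for which both ∫_{−∞}^{∞} R(s)·cos(ωs) ds = 0 and ∫_{−∞}^{∞} R(s)·sin(ωs) ds = 0 has no accumulation point in ℝ (it is a discrete subset of ℝ). -/
open MeasureTheory Filter Set Complex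
open scoped FourierTransform Topology

/-!
The two integrals are the real and imaginary parts of `F ω = ∫ R s * exp (i ω s) ds`.
Exponential decay of `R` makes `F` holomorphic on the strip `|Im z| < ξ` (differentiate under
the integral sign), so if its real zeros accumulated at a real point, `F` would vanish on the
whole strip by the identity theorem. In particular the Fourier transform of `R` vanishes, and
Fourier inversion forces `R = 0`.
-/

lemma integrable_exp_neg_mul_abs {c : ℝ} (hc : 0 < c) :
    Integrable fun x : ℝ => Real.exp (-c * |x|) := by
  have h : IntegrableOn (fun x : ℝ => Real.exp (-c * |x|)) (Ioi 0) :=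
    (exp_neg_integrableOn_Ioi 0 hc).congr_fun (fun x hx => by rw [abs_of_pos hx])
      measurableSet_Ioi
  rw [← integrableOn_univ, ← Iio_union_Ici (a := (0 : ℝ)), integrableOn_union,
    integrableOn_Ici_iff_integrableOn_Ioi]
  refine ⟨?_, h⟩
  rw [← (Measure.measurePreserving_neg (volume : Measure ℝ)).integrableOn_comp_preimage
      (Homeomorph.neg ℝ).measurableEmbedding]
  simpa only [Function.comp_def, abs_neg, neg_preimage, neg_Iio, neg_zero] using h

lemma abs_le_exp_mul_abs_div {a : ℝ} (ha : 0 < a) (s : ℝ) : |s| ≤ Real.exp (a * |s|) / a := by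
  rw [le_div_iff₀ ha, mul_comm]
  linarith [Real.add_one_le_exp (a * |s|)]

lemma norm_cexp_mul_ofReal_mul_I_le (z : ℂ) (s : ℝ) :
    ‖cexp (z * s * I)‖ ≤ Real.exp (|z.im| * |s|) := by
  rw [norm_exp, ← abs_mul]
  gcongr
  simpa using neg_le_abs (z.im * s)

section Decay

variable {E : Type*} [NormedAddCommGroup E] {f : ℝ → E} {C ξ : ℝ}

lemma integrable_of_norm_le_mul_exp_neg_mul_abs (hfm : AEStronglyMeasurable f) (hξ : 0 < ξ)
    (hf : ∀ s, ‖f s‖ ≤ C * Real.exp (-ξ * |s|)) : Integrable f :=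
  ((integrable_exp_neg_mul_abs hξ).const_mul C).mono' hfm (ae_of_all _ hf)

lemma nonneg_of_norm_le_mul_exp_neg_mul_abs (hf : ∀ s, ‖f s‖ ≤ C * Real.exp (-ξ * |s|)) :
    0 ≤ C := by
  simpa using (norm_nonneg _).trans (hf 0)

end Decay

section FourierLaplace

variable {E : Type*} [NormedAddCommGroup E] [NormedSpace ℂ E] {f : ℝ → E} {C ξ : ℝ}

noncomputable def fourierLaplace (f : ℝ → E) (z : ℂ) : E :=
  ∫ s : ℝ, cexp (z * s * I) • f s

lemma fourier_eq_fourierLaplace (f : ℝ → E) (w : ℝ) :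
    𝓕 f w = fourierLaplace f (-2 * Real.pi * w : ℝ) := by
  rw [Real.fourier_real_eq_integral_exp_smul, fourierLaplace]
  congr! 4 with s
  push_cast
  ring

lemma norm_cexp_smul_le (hf : ∀ s, ‖f s‖ ≤ C * Real.exp (-ξ * |s|)) (z : ℂ) (s : ℝ) :
    ‖cexp (z * s * I) • f s‖ ≤ C * Real.exp (-(ξ - |z.im|) * |s|) :=
  calc ‖cexp (z * s * I) • f s‖ ≤ Real.exp (|z.im| * |s|) * (C * Real.exp (-ξ * |s|)) := by
        rw [norm_smul]
        exact mul_le_mul (norm_cexp_mul_ofReal_mul_I_le z s) (hf s) (norm_nonneg _)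
          (by positivity)
    _ = C * Real.exp (-(ξ - |z.im|) * |s|) := by
        rw [mul_left_comm, ← Real.exp_add]
        ring_nf

lemma integrable_cexp_smul (hfm : AEStronglyMeasurable f)
    (hf : ∀ s, ‖f s‖ ≤ C * Real.exp (-ξ * |s|)) {z : ℂ} (hz : |z.im| < ξ) :
    Integrable fun s : ℝ => cexp (z * s * I) • f s :=
  integrable_of_norm_le_mul_exp_neg_mul_abs
    ((by fun_prop : Continuous _).aestronglyMeasurable.smul hfm) (sub_pos.2 hz)
    (norm_cexp_smul_le hf z)

lemma norm_mul_I_mul_cexp_smul_le (hf : ∀ s, ‖f s‖ ≤ C * Real.exp (-ξ * |s|)) {ε : ℝ}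
    (hε : 0 < ε) {z : ℂ} (hz : |z.im| ≤ ξ - 2 * ε) (s : ℝ) :
    ‖(s * I * cexp (z * s * I)) • f s‖ ≤ C / ε * Real.exp (-ε * |s|) := by
  have hC := nonneg_of_norm_le_mul_exp_neg_mul_abs hf
  calc ‖(s * I * cexp (z * s * I)) • f s‖ = |s| * ‖cexp (z * s * I) • f s‖ := by
        rw [mul_smul, norm_smul, norm_mul, norm_I, mul_one, norm_real, Real.norm_eq_abs]
    _ ≤ Real.exp (ε * |s|) / ε * (C * Real.exp (-(2 * ε) * |s|)) := by
        gcongr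
        · exact abs_le_exp_mul_abs_div hε s
        · refine (norm_cexp_smul_le hf z s).trans ?_
          gcongr
          linarith
    _ = C / ε * (Real.exp (ε * |s|) * Real.exp (-(2 * ε) * |s|)) := by ring
    _ = C / ε * Real.exp (-ε * |s|) := by rw [← Real.exp_add]; ring_nf

lemma hasDerivAt_cexp_smul (z : ℂ) (s : ℝ) (v : E) :
    HasDerivAt (fun z : ℂ => cexp (z * s * I) • v) ((s * I * cexp (z * s * I)) • v) z := by
  convert (((hasDerivAt_id' z).mul_const (s : ℂ)).mul_const I).cexp.smul_const v using 2
  ring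

lemma hasDerivAt_fourierLaplace (hfm : AEStronglyMeasurable f)
    (hf : ∀ s, ‖f s‖ ≤ C * Real.exp (-ξ * |s|)) {z₀ : ℂ} (hz₀ : |z₀.im| < ξ) :
    HasDerivAt (fourierLaplace f) (∫ s : ℝ, (s * I * cexp (z₀ * s * I)) • f s) z₀ := by
  -- Near `z₀` the decay rate `ξ - |z.im|` stays above `2ε`, which absorbs the factor `|s|`.
  set ε := (ξ - |z₀.im|) / 4 with hε_def
  have hε : 0 < ε := by positivity
  have hball : ∀ z ∈ Metric.ball z₀ ε, |z.im| ≤ ξ - 2 * ε := by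
    intro z hz
    have := (abs_sub_abs_le_abs_sub z.im z₀.im).trans
      ((abs_im_le_norm (z - z₀)).trans (mem_ball_iff_norm.1 hz).le)
    linarith [hε_def]
  exact (hasDerivAt_integral_of_dominated_loc_of_deriv_le (Metric.ball_mem_nhds z₀ hε)
    (Eventually.of_forall fun z => ((by fun_prop : Continuous _).aestronglyMeasurable.smul hfm))
    (integrable_cexp_smul hfm hf hz₀)
    (((by fun_prop : Continuous _).aestronglyMeasurable.smul hfm))
    (ae_of_all _ fun s z hz => norm_mul_I_mul_cexp_smul_le hf hε (hball z hz) s)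
    ((integrable_exp_neg_mul_abs hε).const_mul _)
    (ae_of_all _ fun s z _ => hasDerivAt_cexp_smul z s (f s))).2

lemma analyticOnNhd_fourierLaplace [CompleteSpace E] (hfm : AEStronglyMeasurable f)
    (hf : ∀ s, ‖f s‖ ≤ C * Real.exp (-ξ * |s|)) :
    AnalyticOnNhd ℂ (fourierLaplace f) {z | |z.im| < ξ} :=
  DifferentiableOn.analyticOnNhd
    (fun _ hz => (hasDerivAt_fourierLaplace hfm hf hz).differentiableAt.differentiableWithinAt)
    (isOpen_lt (by fun_prop) continuous_const)

lemma fourierLaplace_eqOn_zero_of_frequently_eq_zero [CompleteSpace E]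
    (hfm : AEStronglyMeasurable f) (hf : ∀ s, ‖f s‖ ≤ C * Real.exp (-ξ * |s|)) {z₀ : ℂ}
    (hz₀ : |z₀.im| < ξ) (h : ∃ᶠ z in 𝓝[≠] z₀, fourierLaplace f z = 0) :
    EqOn (fourierLaplace f) 0 {z | |z.im| < ξ} := by
  have hstrip : {z : ℂ | |z.im| < ξ} = im ⁻¹' Ioo (-ξ) ξ := by
    ext z
    simp [abs_lt]
  refine (analyticOnNhd_fourierLaplace hfm hf).eqOn_zero_of_preconnected_of_frequently_eq_zero
    ?_ hz₀ h
  rw [hstrip]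
  exact ((convex_Ioo _ _).linear_preimage imLm).isPreconnected

end FourierLaplace

lemma fourierLaplace_ofReal {R : ℝ → ℝ} (hR : Integrable R) (ω : ℝ) :
    fourierLaplace (fun s => (R s : ℂ)) ω =
      (∫ s, R s * Real.cos (ω * s) : ℝ) + (∫ s, R s * Real.sin (ω * s) : ℝ) * I := by
  have hint : Integrable fun s : ℝ => cexp (ω * s * I) • (R s : ℂ) :=
    hR.ofReal.bdd_mul (c := 1) (by fun_prop)
      (ae_of_all _ fun s => by rw [← ofReal_mul, norm_exp_ofReal_mul_I])
  apply Complex.ext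
  · simpa [fourierLaplace, ← ofReal_mul, exp_ofReal_mul_I_re, mul_comm (R _)]
      using (integral_re hint).symm
  · simpa [fourierLaplace, ← ofReal_mul, exp_ofReal_mul_I_im, mul_comm (R _)]
      using (integral_im hint).symm

lemma Continuous.eq_zero_of_fourier_eq_zero {V E : Type*} [NormedAddCommGroup V]
    [InnerProductSpace ℝ V] [FiniteDimensional ℝ V] [MeasurableSpace V] [BorelSpace V]
    [NormedAddCommGroup E] [NormedSpace ℂ E] [CompleteSpace E] {f : V → E}
    (hc : Continuous f) (hf : Integrable f) (h : 𝓕 f = 0) : f = 0 := by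
  rw [← hc.fourierInv_fourier_eq hf (h ▸ integrable_zero _ _ _), h]
  ext v
  simp [Real.fourierInv_eq]

theorem stmt17_general (R : ℝ → ℝ) (hR : Continuous R)
    (C ξ : ℝ) (hξ : 0 < ξ)
    (hdecay : ∀ s : ℝ, |R s| ≤ C * Real.exp (-ξ * |s|))
    (hne : R ≠ 0) :
    ∀ x : ℝ, ¬ AccPt x (Filter.principal {ω : ℝ |
      (∫ s : ℝ, R s * Real.cos (ω * s)) = 0 ∧
      (∫ s : ℝ, R s * Real.sin (ω * s)) = 0}) := by
  intro x hx
  set f : ℝ → ℂ := fun s => R s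
  have hfc : Continuous f := by fun_prop
  have hf : ∀ s, ‖f s‖ ≤ C * Real.exp (-ξ * |s|) := by simpa [f] using hdecay
  have hRint : Integrable R :=
    integrable_of_norm_le_mul_exp_neg_mul_abs hR.aestronglyMeasurable hξ hdecay
  have hfreq : ∃ᶠ z in 𝓝[≠] (x : ℂ), fourierLaplace f z = 0 := by
    have hofReal : Tendsto ((↑) : ℝ → ℂ) (𝓝[≠] x) (𝓝[≠] (x : ℂ)) :=
      continuous_ofReal.continuousWithinAt.tendsto_nhdsWithin fun _ _ => by simp_all
    refine hofReal.frequently ((accPt_iff_frequently_nhdsNE.1 hx).mono ?_)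
    rintro ω ⟨hcos, hsin⟩
    simp [f, fourierLaplace_ofReal hRint, hcos, hsin]
  have hzero := fourierLaplace_eqOn_zero_of_frequently_eq_zero hfc.aestronglyMeasurable hf
    (by simpa using hξ) hfreq
  have hfourier : 𝓕 f = 0 := funext fun w => by
    rw [fourier_eq_fourierLaplace, hzero (by simpa using hξ)]
    rfl
  refine hne (funext fun s => ?_)
  simpa [f] using congrFun (hfc.eq_zero_of_fourier_eq_zero hRint.ofReal hfourier) s

/-- The common zeros of the Melnikov integrals C(ω), S(ω) of an exponentially
decaying, not identically zero function R form a discrete subset of ℝ. -/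
theorem stmt17 (R : ℝ → ℝ) (hR : Continuous R)
    (C ξ : ℝ) (hC : 0 < C) (hξ : 0 < ξ)
    (hdecay : ∀ s : ℝ, |R s| ≤ C * Real.exp (-ξ * |s|))
    (hne : R ≠ 0) :
    ∀ x : ℝ, ¬ AccPt x (Filter.principal {ω : ℝ |
      (∫ s : ℝ, R s * Real.cos (ω * s)) = 0 ∧
      (∫ s : ℝ, R s * Real.sin (ω * s)) = 0}) :=
  stmt17_general R hR C ξ hξ hdecay hne
end

section
/- Let I ⊂ ℝ be an open interval and let w : I → ℝ be a C¹ function with |w(θ)| ≤ 1 and |w′(θ)| ≤ 1/100 for all θ ∈ I, such that for every θ ∈ I the point p = (θ, w(θ)) lies in V and satisfies F(p) ≥ √k and |1 − d·F_θ(p)/F(p)| ≥ 2. Write (Θ(θ), Z(θ)) = T(θ, w(θ)). Then for all θ ∈ I: |Θ′(θ)| ≥ 3/2 and |Z′(θ)| ≤ γ·b·12^γ ≤ 10⁻⁴. In particular Θ is strictly monotone on I, and the image curve {T(θ, w(θ)) : θ ∈ I} is the graph of a C¹ function w₁ over the interval Θ(I) with |w₁′| ≤ 10⁻⁴ everywhere.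 -/
/-!
Along the curve `t ↦ (t, w t)` put `g = F ∘ (id, w)`, so that `Θ = t + a - d log g` and
`Z = b g^γ`. By the chain rule `g' = F_θ + w' F_z`, hence
`Θ' = (1 - d F_θ / F) - d w' F_z / F`. The first term has modulus at least `2`, and since
`|F_z| ≤ 3k/2`, `F ≥ √k` and `d √k ≤ 1/100`, the second is at most `3/20000`. On the other hand
`Z' = b γ g^(γ-1) g'` with `0 < g ≤ 12` and `|g'| ≤ 12`. Since `Θ'` never vanishes on the
interval, Darboux's theorem makes `Θ` strictly monotone, and `w₁ = Z ∘ Θ⁻¹` is `C¹` with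
`|w₁'| = |Z'| / |Θ'|`.
-/

open Real Set Function Filter

section ChainRule

variable {G : ℝ → ℝ → ℝ}

theorem hasDerivAt_uncurry_comp {x y : ℝ → ℝ} {x' y' t : ℝ}
    (hG : DifferentiableAt ℝ (uncurry G) (x t, y t)) (hx : HasDerivAt x x' t)
    (hy : HasDerivAt y y' t) :
    HasDerivAt (fun s => G (x s) (y s)) (fderiv ℝ (uncurry G) (x t, y t) (x', y')) t :=
  hG.hasFDerivAt.comp_hasDerivAt (f := fun s => (x s, y s)) t (hx.prodMk hy)

theorem hasDerivAt_uncurry_left {x y : ℝ} (hG : DifferentiableAt ℝ (uncurry G) (x, y)) :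
    HasDerivAt (fun s => G s y) (fderiv ℝ (uncurry G) (x, y) (1, 0)) x :=
  hasDerivAt_uncurry_comp (x := fun s => s) (y := fun _ => y) hG (hasDerivAt_id x)
    (hasDerivAt_const x y)

theorem hasDerivAt_uncurry_right {x y : ℝ} (hG : DifferentiableAt ℝ (uncurry G) (x, y)) :
    HasDerivAt (G x) (fderiv ℝ (uncurry G) (x, y) (0, 1)) y :=
  hasDerivAt_uncurry_comp (x := fun _ => x) (y := fun s => s) hG (hasDerivAt_const y x)
    (hasDerivAt_id y)

theorem hasDerivAt_uncurry_graph {w : ℝ → ℝ} {θ w' : ℝ}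
    (hG : DifferentiableAt ℝ (uncurry G) (θ, w θ)) (hw : HasDerivAt w w' θ) :
    HasDerivAt (fun t => G t (w t))
      (deriv (fun t => G t (w θ)) θ + w' * deriv (G θ) (w θ)) θ := by
  have hsplit : ((1 : ℝ), w') = (1, 0) + w' • (0, 1) := by simp
  have h := hasDerivAt_uncurry_comp (x := fun t => t) hG (hasDerivAt_id θ) hw
  rwa [hsplit, map_add, map_smul, smul_eq_mul, ← (hasDerivAt_uncurry_left hG).deriv,
    ← (hasDerivAt_uncurry_right hG).deriv] at h

end ChainRule

theorem strictMonoOn_or_strictAntiOn_of_deriv_ne_zero {D : Set ℝ} {f : ℝ → ℝ}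
    (hD : Convex ℝ D) (hDo : IsOpen D) (hf : DifferentiableOn ℝ f D)
    (h0 : ∀ x ∈ D, deriv f x ≠ 0) : StrictMonoOn f D ∨ StrictAntiOn f D := by
  have hf' : ∀ x ∈ D, HasDerivWithinAt f (deriv f x) D x := fun x hx =>
    ((hf x hx).differentiableAt (hDo.mem_nhds hx)).hasDerivAt.hasDerivWithinAt
  rcases hasDerivWithinAt_forall_lt_or_forall_gt_of_forall_ne hD hf' h0 with hneg | hpos
  · exact .inr <| strictAntiOn_of_deriv_neg hD hf.continuousOn fun x hx =>
      hneg x (interior_subset hx)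
  · exact .inl <| strictMonoOn_of_deriv_pos hD hf.continuousOn fun x hx =>
      hpos x (interior_subset hx)

section GraphOverImage

variable {I : Set ℝ} {Θ Z : ℝ → ℝ}

theorem hasStrictDerivAt_invFunOn (hI : IsOpen I) (hΘ : ContDiffOn ℝ 1 Θ I) (hinj : InjOn Θ I)
    {θ : ℝ} (hθ : θ ∈ I) (h0 : deriv Θ θ ≠ 0) :
    HasStrictDerivAt (invFunOn Θ I) (deriv Θ θ)⁻¹ (Θ θ) :=
  ((hΘ.contDiffAt (hI.mem_nhds hθ)).hasStrictDerivAt one_ne_zero).to_local_left_inverse h0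
    (eventually_of_mem (hI.mem_nhds hθ) fun _ hx => hinj.leftInvOn_invFunOn hx)

theorem isOpen_image_of_deriv_ne_zero (hI : IsOpen I) (hΘ : ContDiffOn ℝ 1 Θ I)
    (h0 : ∀ θ ∈ I, deriv Θ θ ≠ 0) : IsOpen (Θ '' I) := by
  rw [isOpen_iff_mem_nhds]
  rintro _ ⟨θ, hθ, rfl⟩
  rw [← ((hΘ.contDiffAt (hI.mem_nhds hθ)).hasStrictDerivAt one_ne_zero).map_nhds_eq (h0 θ hθ)]
  exact image_mem_map (hI.mem_nhds hθ)

section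

variable (hI : IsOpen I) (hΘ : ContDiffOn ℝ 1 Θ I) (hinj : InjOn Θ I)
  (h0 : ∀ θ ∈ I, deriv Θ θ ≠ 0) (hZ : ContDiffOn ℝ 1 Z I)
include hI hΘ hinj h0 hZ

theorem hasDerivAt_comp_invFunOn {θ : ℝ} (hθ : θ ∈ I) :
    HasDerivAt (Z ∘ invFunOn Θ I) (deriv Z θ / deriv Θ θ) (Θ θ) := by
  have hZθ : HasDerivAt Z (deriv Z θ) (invFunOn Θ I (Θ θ)) := by
    rw [hinj.leftInvOn_invFunOn hθ]
    exact ((hZ.contDiffAt (hI.mem_nhds hθ)).differentiableAt one_ne_zero).hasDerivAt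
  exact hZθ.comp (Θ θ) (hasStrictDerivAt_invFunOn hI hΘ hinj hθ (h0 θ hθ)).hasDerivAt

theorem contDiffOn_comp_invFunOn : ContDiffOn ℝ 1 (Z ∘ invFunOn Θ I) (Θ '' I) := by
  have hmaps : MapsTo (invFunOn Θ I) (Θ '' I) I := by
    rintro _ ⟨θ, hθ, rfl⟩
    rwa [hinj.leftInvOn_invFunOn hθ]
  have hcont : ContinuousOn (invFunOn Θ I) (Θ '' I) := by
    rintro _ ⟨θ, hθ, rfl⟩
    exact (hasStrictDerivAt_invFunOn hI hΘ hinj hθ (h0 θ hθ)).hasDerivAt.continuousAt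
      |>.continuousWithinAt
  have hderiv : EqOn (deriv (Z ∘ invFunOn Θ I))
      ((fun θ => deriv Z θ / deriv Θ θ) ∘ invFunOn Θ I) (Θ '' I) := by
    rintro _ ⟨θ, hθ, rfl⟩
    simp only [comp_apply, (hasDerivAt_comp_invFunOn hI hΘ hinj h0 hZ hθ).deriv,
      hinj.leftInvOn_invFunOn hθ]
  have hderiv_cont : ContinuousOn (fun θ => deriv Z θ / deriv Θ θ) I :=
    (hZ.continuousOn_deriv_of_isOpen hI le_rfl).div
      (hΘ.continuousOn_deriv_of_isOpen hI le_rfl) h0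
  refine (contDiffOn_succ_iff_deriv_of_isOpen (n := 0) (isOpen_image_of_deriv_ne_zero hI hΘ h0)).2
    ⟨?_, by simp, contDiffOn_zero.2 ((hderiv_cont.comp hcont hmaps).congr hderiv)⟩
  rintro _ ⟨θ, hθ, rfl⟩
  exact (hasDerivAt_comp_invFunOn hI hΘ hinj h0 hZ hθ).differentiableAt.differentiableWithinAt

end

theorem exists_graph_over_image_of_le_abs_deriv (hI : IsOpen I) (hIc : Convex ℝ I)
    (hΘ : ContDiffOn ℝ 1 Θ I) (hZ : ContDiffOn ℝ 1 Z I) {m M : ℝ} (hm : 0 < m)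
    (hΘ' : ∀ θ ∈ I, m ≤ |deriv Θ θ|) (hZ' : ∀ θ ∈ I, |deriv Z θ| ≤ M) :
    (StrictMonoOn Θ I ∨ StrictAntiOn Θ I) ∧ ∃ w₁ : ℝ → ℝ, ContDiffOn ℝ 1 w₁ (Θ '' I) ∧
      (∀ θ ∈ I, w₁ (Θ θ) = Z θ) ∧ ∀ s ∈ Θ '' I, |deriv w₁ s| ≤ M / m := by
  have h0 : ∀ θ ∈ I, deriv Θ θ ≠ 0 := fun θ hθ h => by
    have := hΘ' θ hθ
    rw [h, abs_zero] at this
    linarith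
  have hmono := strictMonoOn_or_strictAntiOn_of_deriv_ne_zero hIc hI
    (hΘ.differentiableOn one_ne_zero) h0
  have hinj : InjOn Θ I := hmono.elim StrictMonoOn.injOn StrictAntiOn.injOn
  refine ⟨hmono, Z ∘ invFunOn Θ I, contDiffOn_comp_invFunOn hI hΘ hinj h0 hZ,
    fun θ hθ => by simp [hinj.leftInvOn_invFunOn hθ], ?_⟩
  rintro _ ⟨θ, hθ, rfl⟩
  rw [(hasDerivAt_comp_invFunOn hI hΘ hinj h0 hZ hθ).deriv, abs_div]
  exact div_le_div₀ ((abs_nonneg _).trans (hZ' θ hθ)) (hZ' θ hθ) hm (hΘ' θ hθ)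

end GraphOverImage

theorem three_halves_le_abs_one_sub_mul_div {d s g p q v : ℝ} (hd : 0 ≤ d) (hs : 0 < s)
    (hsg : s ≤ g) (hds : d * s ≤ 1 / 100) (hq : |q| ≤ 3 * s ^ 2 / 2) (hv : |v| ≤ 1 / 100)
    (h2 : 2 ≤ |1 - d * p / g|) : 3 / 2 ≤ |1 - d * ((p + v * q) / g)| := by
  have hg : 0 < g := hs.trans_le hsg
  have hsplit : 1 - d * ((p + v * q) / g) = (1 - d * p / g) - d * v * q / g := by
    field_simp
    ring
  have hsmall : |d * v * q / g| ≤ 1 / 2 := by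
    rw [abs_div, abs_mul, abs_mul, abs_of_nonneg hd, abs_of_pos hg, div_le_iff₀ hg]
    calc d * |v| * |q| ≤ d * (1 / 100) * (3 * s ^ 2 / 2) := by gcongr
      _ = 3 / 200 * (d * s) * s := by ring
      _ ≤ 3 / 200 * (1 / 100) * s := by gcongr
      _ ≤ 1 / 2 * g := by linarith
  rw [hsplit]
  linarith [abs_sub_abs_le_abs_sub (1 - d * p / g) (d * v * q / g)]

theorem abs_mul_mul_rpow_le {b γ x x' R : ℝ} (hb : 0 ≤ b) (hγ : 1 ≤ γ) (hx : 0 ≤ x)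
    (hxR : x ≤ R) (hx' : |x'| ≤ R) : |b * (x' * γ * x ^ (γ - 1))| ≤ γ * b * R ^ γ := by
  have hR : 0 ≤ R := hx.trans hxR
  calc |b * (x' * γ * x ^ (γ - 1))| = γ * b * (|x'| * x ^ (γ - 1)) := by
        rw [abs_mul, abs_mul, abs_mul, abs_of_nonneg hb, abs_of_nonneg (by linarith : 0 ≤ γ),
          abs_of_nonneg (rpow_nonneg hx _)]
        ring
    _ ≤ γ * b * (R * R ^ (γ - 1)) := by gcongr
    _ = γ * b * R ^ γ := by rw [← rpow_one_add' hR (by linarith), add_sub_cancel]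

noncomputable def modelF (c k : ℝ) (E : ℝ → ℝ → ℝ) (θ z : ℝ) : ℝ := 1 + c * sin θ + k * z + E θ z

section ModelF

variable {c k : ℝ} {E : ℝ → ℝ → ℝ}

theorem contDiff_uncurry_modelF (hE : ContDiff ℝ 1 (uncurry E)) :
    ContDiff ℝ 1 (uncurry (modelF c k E)) := by
  change ContDiff ℝ 1 fun p : ℝ × ℝ => 1 + c * sin p.1 + k * p.2 + uncurry E p
  fun_prop

variable {θ z : ℝ}

theorem modelF_le_twelve (hc : c ∈ Icc 0 10) (hk : k ∈ Icc 0 (1 / 100)) (hz : |z| ≤ 1)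
    (hE : |E θ z| ≤ 1 / 50) : modelF c k E θ z ≤ 12 := by
  have hsin := mul_le_of_le_one_right hc.1 (sin_le_one θ)
  have hkz : k * z ≤ 1 / 100 := by nlinarith [abs_le.1 hz, hk.1, hk.2]
  unfold modelF
  linarith [le_abs_self (E θ z), hc.2]

variable (hE : DifferentiableAt ℝ (uncurry E) (θ, z))
include hE

theorem hasDerivAt_modelF_left :
    HasDerivAt (fun t => modelF c k E t z) (c * cos θ + deriv (fun t => E t z) θ) θ := by
  have hEθ := hasDerivAt_uncurry_left hE
  rw [← hEθ.deriv] at hEθ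
  exact ((((hasDerivAt_sin θ).const_mul c).const_add 1).add_const (k * z)).add hEθ

theorem hasDerivAt_modelF_right : HasDerivAt (modelF c k E θ) (k + deriv (E θ) z) z := by
  have hEz := hasDerivAt_uncurry_right hE
  rw [← hEz.deriv] at hEz
  exact ((hasDerivAt_id z).const_mul k |>.const_add _ |>.add hEz).congr_deriv (by simp)

theorem abs_deriv_modelF_right_le (hk : 0 ≤ k) (hEz : |deriv (E θ) z| ≤ k / 2) :
    |deriv (modelF c k E θ) z| ≤ 3 * k / 2 := by
  rw [(hasDerivAt_modelF_right hE).deriv]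
  linarith [abs_add_le k (deriv (E θ) z), abs_of_nonneg hk]

theorem abs_deriv_modelF_graph_le_twelve {v : ℝ} (hc : c ∈ Icc 0 10) (hk : k ∈ Icc 0 (1 / 100))
    (hEθ : |deriv (fun t => E t z) θ| ≤ 1 / 50) (hEz : |deriv (E θ) z| ≤ k / 2)
    (hv : |v| ≤ 1 / 100) :
    |deriv (fun t => modelF c k E t z) θ + v * deriv (modelF c k E θ) z| ≤ 12 := by
  have hFθ : |deriv (fun t => modelF c k E t z) θ| ≤ c + 1 / 50 := by
    rw [(hasDerivAt_modelF_left hE).deriv]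
    have : |c * cos θ| ≤ c := by
      rw [abs_mul, abs_of_nonneg hc.1]
      exact mul_le_of_le_one_right hc.1 (abs_cos_le_one θ)
    linarith [abs_add_le (c * cos θ) (deriv (fun t => E t z) θ)]
  have hFz := abs_deriv_modelF_right_le (c := c) hE hk.1 hEz
  calc _ ≤ |deriv (fun t => modelF c k E t z) θ| + |v| * |deriv (modelF c k E θ) z| := by
        rw [← abs_mul]; exact abs_add_le _ _
    _ ≤ 10 + 1 / 50 + 1 / 100 * (3 * (1 / 100) / 2) := by
        gcongr
        · linarith [hc.2]
        · linarith [hk.2]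
    _ ≤ 12 := by norm_num

end ModelF

section ModelGraph

variable {c k : ℝ} {E : ℝ → ℝ → ℝ} {w : ℝ → ℝ} {θ : ℝ} (hE : ContDiff ℝ 1 (uncurry E))
include hE

theorem contDiffOn_modelF_graph {I : Set ℝ} (hw : ContDiffOn ℝ 1 w I) :
    ContDiffOn ℝ 1 (fun t => modelF c k E t (w t)) I :=
  (contDiff_uncurry_modelF hE).comp_contDiffOn (f := fun t => (t, w t)) (contDiffOn_id.prodMk hw)

theorem hasDerivAt_modelF_graph (hw : DifferentiableAt ℝ w θ) :
    HasDerivAt (fun t => modelF c k E t (w t))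
      (deriv (fun t => modelF c k E t (w θ)) θ + deriv w θ * deriv (modelF c k E θ) (w θ)) θ :=
  hasDerivAt_uncurry_graph ((contDiff_uncurry_modelF hE).differentiable one_ne_zero _)
    hw.hasDerivAt

theorem three_halves_le_abs_deriv_sub_log_modelF_graph {a d : ℝ} (hw : DifferentiableAt ℝ w θ)
    (hd : 0 ≤ d) (hk : 0 < k) (hdk : d * √k ≤ 1 / 100) (hEz : |deriv (E θ) (w θ)| ≤ k / 2)
    (hw' : |deriv w θ| ≤ 1 / 100) (hF : √k ≤ modelF c k E θ (w θ))
    (h2 : 2 ≤ |1 - d * deriv (fun t => modelF c k E t (w θ)) θ / modelF c k E θ (w θ)|) :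
    3 / 2 ≤ |deriv (fun t => t + a - d * log (modelF c k E t (w t))) θ| := by
  have hpos := (sqrt_pos.2 hk).trans_le hF
  have hΘ : HasDerivAt (fun t => t + a - d * log (modelF c k E t (w t))) _ θ :=
    ((hasDerivAt_id θ).add_const a).sub (((hasDerivAt_modelF_graph hE hw).log hpos.ne').const_mul d)
  rw [hΘ.deriv]
  refine three_halves_le_abs_one_sub_mul_div hd (sqrt_pos.2 hk) hF hdk ?_ hw' h2
  rw [sq_sqrt hk.le]
  exact abs_deriv_modelF_right_le (hE.differentiable one_ne_zero _) hk.le hEz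

theorem abs_deriv_mul_rpow_modelF_graph_le {b γ : ℝ} (hw : DifferentiableAt ℝ w θ) (hb : 0 ≤ b)
    (hγ : 1 ≤ γ) (hc : c ∈ Icc 0 10) (hk : k ∈ Icc 0 (1 / 100))
    (hEθ : |E θ (w θ)| + |deriv (fun t => E t (w θ)) θ| ≤ 1 / 50)
    (hEz : |deriv (E θ) (w θ)| ≤ k / 2) (hwθ : |w θ| ≤ 1) (hw' : |deriv w θ| ≤ 1 / 100)
    (hpos : 0 < modelF c k E θ (w θ)) :
    |deriv (fun t => b * modelF c k E t (w t) ^ γ) θ| ≤ γ * b * 12 ^ γ := by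
  rw [(((hasDerivAt_modelF_graph hE hw).rpow_const (.inl hpos.ne')).const_mul b).deriv]
  exact abs_mul_mul_rpow_le hb hγ hpos.le
    (modelF_le_twelve hc hk hwθ (le_of_add_le_of_nonneg_left hEθ (abs_nonneg _)))
    (abs_deriv_modelF_graph_le_twelve (hE.differentiable one_ne_zero _) hc hk
      (le_of_add_le_of_nonneg_right hEθ (abs_nonneg _)) hEz hw')

end ModelGraph

theorem stmt19_general (d γ c a k b : ℝ) (E : ℝ → ℝ → ℝ)
    (hd : 100 ≤ d) (hγ : 1 < γ) (hc : c ∈ Set.Icc (2:ℝ) 10)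
    (hk : 0 < k) (hb : 0 < b)
    (hdk : d * Real.sqrt k ≤ 1/100)
    (hγb : γ * b * (12:ℝ) ^ γ ≤ 1/10000)
    (hE : ContDiff ℝ 1 (Function.uncurry E))
    (hEbd : ∀ θ z : ℝ, |E θ z| + |deriv (fun t => E t z) θ| ≤ 1/50 ∧
      |deriv (fun t => E θ t) z| ≤ k/2)
    (F T₁ T₂ : ℝ → ℝ → ℝ)
    (hF : F = fun θ z => 1 + c * Real.sin θ + k * z + E θ z)
    (hT₁ : T₁ = fun θ z => θ + a - d * Real.log (F θ z))
    (hT₂ : T₂ = fun θ z => b * (F θ z) ^ γ)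
    (i₁ i₂ : ℝ)
    (w : ℝ → ℝ) (hw : ContDiffOn ℝ 1 w (Set.Ioo i₁ i₂))
    (hwbd : ∀ θ ∈ Set.Ioo i₁ i₂, |w θ| ≤ 1 ∧ |deriv w θ| ≤ 1/100)
    (hpts : ∀ θ ∈ Set.Ioo i₁ i₂, 0 < F θ (w θ) ∧ Real.sqrt k ≤ F θ (w θ) ∧
      2 ≤ |1 - d * (deriv (fun t => F t (w θ)) θ) / F θ (w θ)|) :
    (∀ θ ∈ Set.Ioo i₁ i₂,
      3/2 ≤ |deriv (fun t => T₁ t (w t)) θ| ∧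
      |deriv (fun t => T₂ t (w t)) θ| ≤ γ * b * (12:ℝ) ^ γ ∧
      γ * b * (12:ℝ) ^ γ ≤ 1/10000) ∧
    (StrictMonoOn (fun t => T₁ t (w t)) (Set.Ioo i₁ i₂) ∨
      StrictAntiOn (fun t => T₁ t (w t)) (Set.Ioo i₁ i₂)) ∧
    ∃ w₁ : ℝ → ℝ,
      ContDiffOn ℝ 1 w₁ ((fun t => T₁ t (w t)) '' Set.Ioo i₁ i₂) ∧
      (∀ θ ∈ Set.Ioo i₁ i₂, w₁ (T₁ θ (w θ)) = T₂ θ (w θ)) ∧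
      (∀ s ∈ (fun t => T₁ t (w t)) '' Set.Ioo i₁ i₂, |deriv w₁ s| ≤ 1/10000) := by
  have hFm : F = modelF c k E := hF
  subst hFm
  set I := Ioo i₁ i₂
  have hc' : c ∈ Icc 0 10 := ⟨by linarith [hc.1], hc.2⟩
  have hk' : k ∈ Icc 0 (1 / 100) := ⟨hk.le, by nlinarith [mul_self_sqrt hk.le, sqrt_nonneg k]⟩
  have hwd : ∀ θ ∈ I, DifferentiableAt ℝ w θ := fun θ hθ =>
    (hw.contDiffAt (isOpen_Ioo.mem_nhds hθ)).differentiableAt one_ne_zero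
  have hΘ' : ∀ θ ∈ I, 3 / 2 ≤ |deriv (fun t => T₁ t (w t)) θ| := fun θ hθ => by
    rw [hT₁]
    exact three_halves_le_abs_deriv_sub_log_modelF_graph hE (hwd θ hθ) (by linarith) hk hdk
      (hEbd θ (w θ)).2 (hwbd θ hθ).2 (hpts θ hθ).2.1 (hpts θ hθ).2.2
  have hZ' : ∀ θ ∈ I, |deriv (fun t => T₂ t (w t)) θ| ≤ γ * b * 12 ^ γ := fun θ hθ => by
    rw [hT₂]
    exact abs_deriv_mul_rpow_modelF_graph_le hE (hwd θ hθ) hb.le hγ.le hc' hk' (hEbd θ (w θ)).1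
      (hEbd θ (w θ)).2 (hwbd θ hθ).1 (hwbd θ hθ).2 (hpts θ hθ).1
  have hgC := contDiffOn_modelF_graph (c := c) (k := k) hE hw
  have hΘC : ContDiffOn ℝ 1 (fun t => T₁ t (w t)) I := by
    rw [hT₁]
    exact (contDiffOn_id.add contDiffOn_const).sub
      (contDiffOn_const.mul (hgC.log fun θ hθ => (hpts θ hθ).1.ne'))
  have hZC : ContDiffOn ℝ 1 (fun t => T₂ t (w t)) I := by
    rw [hT₂]
    exact contDiffOn_const.mul (hgC.rpow_const_of_ne fun θ hθ => (hpts θ hθ).1.ne')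
  obtain ⟨hmono, w₁, hw₁C, hw₁, hw₁'⟩ := exists_graph_over_image_of_le_abs_deriv isOpen_Ioo
    (convex_Ioo i₁ i₂) hΘC hZC (by norm_num) hΘ' hZ'
  refine ⟨fun θ hθ => ⟨hΘ' θ hθ, hZ' θ hθ, hγb⟩, hmono, w₁, hw₁C, hw₁, fun s hs => ?_⟩
  linarith [hw₁' s hs]

/-- One-step graph transform estimate: T maps a nearly horizontal C¹ graph in the
expanding region to a nearly horizontal C¹ graph, with |Θ′| ≥ 3/2 and |Z′| ≤ γb12^γ. -/
theorem stmt19 (d γ c a k b : ℝ) (E : ℝ → ℝ → ℝ)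
    (hd : 100 ≤ d) (hγ : 1 < γ) (hc : c ∈ Set.Icc (2:ℝ) 10)
    (hk : 0 < k) (hb : 0 < b)
    (hdk : d * Real.sqrt k ≤ 1/100)
    (hγb : γ * b * (12:ℝ) ^ γ ≤ 1/10000)
    (hE : ContDiff ℝ 1 (Function.uncurry E))
    (hEbd : ∀ θ z : ℝ, |E θ z| + |deriv (fun t => E t z) θ| ≤ 1/50 ∧
      |deriv (fun t => E θ t) z| ≤ k/2)
    (F T₁ T₂ : ℝ → ℝ → ℝ)
    (hF : F = fun θ z => 1 + c * Real.sin θ + k * z + E θ z)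
    (hT₁ : T₁ = fun θ z => θ + a - d * Real.log (F θ z))
    (hT₂ : T₂ = fun θ z => b * (F θ z) ^ γ)
    (i₁ i₂ : ℝ) (hi : i₁ < i₂)
    (w : ℝ → ℝ) (hw : ContDiffOn ℝ 1 w (Set.Ioo i₁ i₂))
    (hwbd : ∀ θ ∈ Set.Ioo i₁ i₂, |w θ| ≤ 1 ∧ |deriv w θ| ≤ 1/100)
    (hpts : ∀ θ ∈ Set.Ioo i₁ i₂, 0 < F θ (w θ) ∧ Real.sqrt k ≤ F θ (w θ) ∧
      2 ≤ |1 - d * (deriv (fun t => F t (w θ)) θ) / F θ (w θ)|) :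
    (∀ θ ∈ Set.Ioo i₁ i₂,
      3/2 ≤ |deriv (fun t => T₁ t (w t)) θ| ∧
      |deriv (fun t => T₂ t (w t)) θ| ≤ γ * b * (12:ℝ) ^ γ ∧
      γ * b * (12:ℝ) ^ γ ≤ 1/10000) ∧
    (StrictMonoOn (fun t => T₁ t (w t)) (Set.Ioo i₁ i₂) ∨
      StrictAntiOn (fun t => T₁ t (w t)) (Set.Ioo i₁ i₂)) ∧
    ∃ w₁ : ℝ → ℝ,
      ContDiffOn ℝ 1 w₁ ((fun t => T₁ t (w t)) '' Set.Ioo i₁ i₂) ∧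
      (∀ θ ∈ Set.Ioo i₁ i₂, w₁ (T₁ θ (w θ)) = T₂ θ (w θ)) ∧
      (∀ s ∈ (fun t => T₁ t (w t)) '' Set.Ioo i₁ i₂, |deriv w₁ s| ≤ 1/10000) :=
  stmt19_general d γ c a k b E hd hγ hc hk hb hdk hγb hE hEbd F T₁ T₂ hF hT₁ hT₂ i₁ i₂ w hw hwbd
    hpts
end
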